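/- arXiv:2505.17597 — 4 statements merged into one kernel-verified Lean document; each statement's English description precedes it below -/
import Mathlib

section
/- Let M be a graded holonomic generalized Eulerian A₁(K)-module such that multiplication by X on M is bijective (M = M_X), and assume ker ∂ and M/∂M are finite dimensional over K. Then χ(∂, M) = 0, i.e. dim_K ker ∂ = dim_K (M/∂M). -/
/-- Multiplication by the variable `X` as a `K`-linear endomorphism of a `K[X]`-module. -/
noncomputable def mulX1 (K : Type) [Field K] (M : Type) [AddCommGroup M] [Module K M]
    [Module (Polynomial K) M] [SMulCommClass K (Polynomial K) M] : Module.End K M where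
  toFun x := (Polynomial.X : Polynomial K) • x
  map_add' _ _ := smul_add _ _ _
  map_smul' a x := (smul_comm a _ x).symm

/-- Holonomicity (Bernstein class) for a module over the first Weyl algebra `A₁(K)`:
finitely many generators `g 0, …, g (t-1)` over `A₁(K)` together with the growth bound
`dim_K span {X^α ∂^β (g i) : α + β ≤ j} ≤ C (j+1)`. -/
noncomputable def IsHolonomic1 (K : Type) [Field K] (M : Type) [AddCommGroup M]
    [Module K M] [Module (Polynomial K) M] (D : Module.End K M) : Prop :=
  ∃ (t : ℕ) (g : Fin t → M) (C : ℕ),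
    Submodule.span K
      {x : M | ∃ (i : Fin t) (α β : ℕ),
        x = (Polynomial.X ^ α : Polynomial K) • ((D ^ β) (g i))} = ⊤ ∧
    ∀ j : ℕ,
      Module.finrank K
        (Submodule.span K
          {x : M | ∃ (i : Fin t) (α β : ℕ), α + β ≤ j ∧
            x = (Polynomial.X ^ α : Polynomial K) • ((D ^ β) (g i))}) ≤ C * (j + 1)

theorem aux_fd (K : Type) [Field K] [CharZero K]
    (M : Type) [AddCommGroup M] [Module K M] [Module (Polynomial K) M]
    [IsScalarTower K (Polynomial K) M] [SMulCommClass K (Polynomial K) M]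
    (D : Module.End K M)
    (hleib : ∀ (f : Polynomial K) (x : M),
      D (f • x) = (Polynomial.derivative f) • x + f • (D x))
    (ℳ : ℤ → Submodule K M)
    (hgradeX : ∀ (j : ℤ) (x : M), x ∈ ℳ j → (Polynomial.X : Polynomial K) • x ∈ ℳ (j + 1))
    (hgradeD : ∀ (j : ℤ) (x : M), x ∈ ℳ j → D x ∈ ℳ (j - 1))
    (hGE : ∀ (j : ℤ) (z : M), z ∈ ℳ j →
      ∃ a : ℕ, 0 < a ∧ ((mulX1 K M * D - j • 1) ^ a) z = 0)
    (π : ℤ → Module.End K M)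
    (hπ₁ : ∀ j x, x ∈ ℳ j → π j x = x)
    (hπ₂ : ∀ i j x, x ∈ ℳ i → i ≠ j → π j x = 0)
    (hπ₃ : ∀ j x, π j x ∈ ℳ j)
    (hπ₄ : ∀ x : M, ∃ s : Finset ℤ, x = ∑ j ∈ s, π j x)
    (hhol : IsHolonomic1 K M D) : FiniteDimensional K (ℳ 0) := by
  classical
  set σ : Module.End K M := mulX1 K M with hσ
  set E : Module.End K M := σ * D with hEdef
  have hσapp : ∀ x : M, σ x = (Polynomial.X : Polynomial K) • x := fun _ => rfl
  -- Weyl relation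
  have hDX : D * σ = 1 + σ * D := by
    ext x
    simp only [Module.End.mul_apply, LinearMap.add_apply, Module.End.one_apply]
    rw [hσapp, hleib, Polynomial.derivative_X, one_smul, hσapp]
  -- X^α • y = σ^α y
  have hXpow : ∀ (α : ℕ) (y : M), (Polynomial.X ^ α : Polynomial K) • y = (σ ^ α) y := by
    intro α
    induction α with
    | zero => intro y; simp
    | succ α ih =>
      intro y
      rw [pow_succ', mul_smul, ih, pow_succ', Module.End.mul_apply, hσapp]
  -- σ^a D^a is a polynomial in E
  have hbase : σ * E = (E - 1) * σ := by
    rw [hEdef]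
    have h1 : (σ * D - 1) * σ = σ * (D * σ) - σ := by noncomm_ring
    rw [h1, hDX]
    noncomm_ring
  have hσE : ∀ a : ℕ, σ ^ a * E = (E - algebraMap K (Module.End K M) (a : K)) * σ ^ a := by
    intro a
    induction a with
    | zero => simp
    | succ a ih =>
      calc σ ^ (a + 1) * E = σ ^ a * (σ * E) := by rw [pow_succ]; noncomm_ring
        _ = σ ^ a * ((E - 1) * σ) := by rw [hbase]
        _ = (σ ^ a * E) * σ - σ ^ a * σ := by noncomm_ring
        _ = ((E - algebraMap K (Module.End K M) (a : K)) * σ ^ a) * σ - σ ^ a * σ := by rw [ih]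
        _ = (E - algebraMap K (Module.End K M) ((a + 1 : ℕ) : K)) * σ ^ (a + 1) := by
            push_cast
            rw [pow_succ]
            noncomm_ring
  have hpow : ∀ a : ℕ, ∃ q : Polynomial K, σ ^ a * D ^ a = Polynomial.aeval E q := by
    intro a
    induction a with
    | zero => exact ⟨1, by simp⟩
    | succ a ih =>
      obtain ⟨q, hq⟩ := ih
      refine ⟨(Polynomial.X - Polynomial.C (a : K)) * q, ?_⟩
      calc σ ^ (a + 1) * D ^ (a + 1) = (σ ^ a * E) * D ^ a := by
            rw [hEdef, pow_succ, pow_succ']; noncomm_ring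
        _ = ((E - algebraMap K (Module.End K M) (a : K)) * σ ^ a) * D ^ a := by rw [hσE]
        _ = (E - algebraMap K (Module.End K M) (a : K)) * (σ ^ a * D ^ a) := by noncomm_ring
        _ = Polynomial.aeval E ((Polynomial.X - Polynomial.C (a : K)) * q) := by
            rw [hq, map_mul, map_sub, Polynomial.aeval_X, Polynomial.aeval_C]
  -- grading of powers
  have hgradeDpow : ∀ (k : ℕ) (j : ℤ) (x : M), x ∈ ℳ j → (D ^ k) x ∈ ℳ (j - k) := by
    intro k
    induction k with
    | zero => intro j x hx; simpa using hx
    | succ k ih =>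
      intro j x hx
      have h1 : (D ^ (k + 1)) x = D ((D ^ k) x) := by
        rw [pow_succ', Module.End.mul_apply]
      rw [h1, show (j - ((k + 1 : ℕ) : ℤ)) = (j - k) - 1 by push_cast; ring]
      exact hgradeD _ _ (ih j x hx)
  have hgradeXpow : ∀ (k : ℕ) (j : ℤ) (x : M), x ∈ ℳ j → (σ ^ k) x ∈ ℳ (j + k) := by
    intro k
    induction k with
    | zero => intro j x hx; simpa using hx
    | succ k ih =>
      intro j x hx
      have h1 : (σ ^ (k + 1)) x = σ ((σ ^ k) x) := by
        rw [pow_succ', Module.End.mul_apply]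
      rw [h1, show (j + ((k + 1 : ℕ) : ℤ)) = (j + k) + 1 by push_cast; ring, hσapp]
      exact hgradeX _ _ (ih j x hx)
  -- polynomial stability of E-stable submodules
  have hstabgen : ∀ (W : Submodule K M), (∀ w ∈ W, E w ∈ W) →
      ∀ (q : Polynomial K) (w : M), w ∈ W → (Polynomial.aeval E q) w ∈ W := by
    intro W hW q w hw
    have hpowmem : ∀ (k : ℕ) (w : M), w ∈ W → (E ^ k) w ∈ W := by
      intro k
      induction k with
      | zero => intro w hw; simpa using hw
      | succ k ih =>
        intro w hw
        rw [pow_succ', Module.End.mul_apply]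
        exact hW _ (ih w hw)
    rw [Polynomial.aeval_eq_sum_range, LinearMap.sum_apply]
    refine Submodule.sum_mem _ fun i _ => ?_
    rw [LinearMap.smul_apply]
    exact Submodule.smul_mem _ _ (hpowmem i w hw)
  -- unpack holonomicity
  obtain ⟨t, g, C, hspan, -⟩ := hhol
  choose s hs using fun i : Fin t => hπ₄ (g i)
  set y : Fin t → ℤ → M := fun i j => (D ^ j.toNat) (π j (g i)) with hy
  have hymem : ∀ i j, y i j ∈ ℳ (j - j.toNat) :=
    fun i j => hgradeDpow _ _ _ (hπ₃ j (g i))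
  have haux : ∀ (i : Fin t) (j : ℤ), ∃ a : ℕ, 0 < a ∧
      ((E - (j - (j.toNat : ℤ)) • 1) ^ a) (y i j) = 0 :=
    fun i j => hGE _ _ (hymem i j)
  choose a hapos haz using haux
  have hzsmul : ∀ (d : ℤ) (w : M), d • w = ((d : K)) • w :=
    fun d w => (Int.cast_smul_eq_zsmul K d w).symm
  have hEexp : ∀ (d : ℤ) (v : M), E v = (E - d • 1) v + (d : K) • v := by
    intro d v
    rw [LinearMap.sub_apply, LinearMap.smul_apply, Module.End.one_apply, ← hzsmul]
    abel
  have hNpow : ∀ (d : ℤ) (k : ℕ) (v : M),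
      ((E - d • 1) ^ (k + 1)) v = (E - d • 1) (((E - d • 1) ^ k) v) := by
    intro d k v
    rw [pow_succ', Module.End.mul_apply]
  set W : Fin t → ℤ → Submodule K M := fun i j =>
    Submodule.span K (Set.range (fun k : Fin (a i j) =>
      ((E - (j - (j.toNat : ℤ)) • 1) ^ (k : ℕ)) (y i j))) with hW
  have hWfd : ∀ i j, FiniteDimensional K (W i j) :=
    fun i j => FiniteDimensional.span_of_finite K (Set.finite_range _)
  have hWy : ∀ i j, y i j ∈ W i j := by
    intro i j
    refine Submodule.subset_span ⟨⟨0, hapos i j⟩, ?_⟩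
    simp
  have hWE : ∀ i j, ∀ w ∈ W i j, E w ∈ W i j := by
    intro i j w hw
    induction hw using Submodule.span_induction with
    | mem w hwmem =>
      obtain ⟨k, rfl⟩ := hwmem
      rw [hEexp (j - (j.toNat : ℤ))]
      refine Submodule.add_mem _ ?_ (Submodule.smul_mem _ _
        (Submodule.subset_span ⟨k, rfl⟩))
      rw [← hNpow]
      rcases Nat.lt_or_ge ((k : ℕ) + 1) (a i j) with hlt | hge
      · exact Submodule.subset_span ⟨⟨(k : ℕ) + 1, hlt⟩, rfl⟩
      · have hk1 : (k : ℕ) + 1 = a i j := le_antisymm k.2 hge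
        rw [hk1, haz i j]
        exact Submodule.zero_mem _
    | zero => rw [map_zero]; exact Submodule.zero_mem _
    | add x z hx hz ihx ihz => rw [map_add]; exact Submodule.add_mem _ ihx ihz
    | smul c x hx ihx => rw [map_smul]; exact Submodule.smul_mem _ _ ihx
  set G : Fin t → ℤ → Submodule K M := fun i j =>
    Submodule.map (σ ^ (-j).toNat) (W i j) with hG
  have hGfd : ∀ i j, FiniteDimensional K (G i j) := by
    intro i j
    haveI := hWfd i j
    exact Module.Finite.map _ _
  set F : Submodule K M := ⨆ p : (Σ i : Fin t, {j : ℤ // j ∈ s i}), G p.1 p.2 with hF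
  haveI hinst : ∀ p : (Σ i : Fin t, {j : ℤ // j ∈ s i}), FiniteDimensional K (G p.1 p.2) :=
    fun p => hGfd p.1 p.2
  haveI hFfd : FiniteDimensional K F := by
    exact Submodule.finiteDimensional_iSup _
  -- key membership
  have hkey : ∀ (i : Fin t) (α β : ℕ) (j : ℤ), j ∈ s i →
      π 0 ((σ ^ α) ((D ^ β) (π j (g i)))) ∈ F := by
    intro i α β j hj
    have hx : π j (g i) ∈ ℳ j := hπ₃ j (g i)
    have hmemdeg : (σ ^ α) ((D ^ β) (π j (g i))) ∈ ℳ ((j - β) + α) :=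
      hgradeXpow _ _ _ (hgradeDpow _ _ _ hx)
    by_cases hcase : (j : ℤ) = (β : ℤ) - (α : ℤ)
    · have h0 : (j - β) + α = 0 := by omega
      rw [hπ₁ 0 _ (h0 ▸ hmemdeg)]
      rcases le_or_gt 0 j with hj0 | hj0
      · have hβ : β = α + j.toNat := by omega
        obtain ⟨q, hq⟩ := hpow α
        have heq : (σ ^ α) ((D ^ β) (π j (g i))) = (Polynomial.aeval E q) (y i j) := by
          rw [hβ, pow_add, Module.End.mul_apply,
            ← Module.End.mul_apply (σ ^ α) (D ^ α), hq, hy]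
        have hWmem : (Polynomial.aeval E q) (y i j) ∈ W i j :=
          hstabgen _ (hWE i j) q _ (hWy i j)
        have hmj : (-j).toNat = 0 := by omega
        have hGmem : (Polynomial.aeval E q) (y i j) ∈ G i j := by
          refine Submodule.mem_map.mpr ⟨_, hWmem, ?_⟩
          rw [hmj, pow_zero, Module.End.one_apply]
        rw [heq]
        exact Submodule.mem_iSup_of_mem (⟨i, ⟨j, hj⟩⟩ : Σ i : Fin t, {j : ℤ // j ∈ s i}) hGmem
      · have hn : j.toNat = 0 := by omega
        have hα : α = (-j).toNat + β := by omega
        obtain ⟨q, hq⟩ := hpow β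
        have heq : (σ ^ α) ((D ^ β) (π j (g i))) =
            (σ ^ (-j).toNat) ((Polynomial.aeval E q) (y i j)) := by
          rw [hα, pow_add, Module.End.mul_apply,
            ← Module.End.mul_apply (σ ^ β) (D ^ β), hq, hy]
          simp only [hn, pow_zero, Module.End.one_apply]
        have hWmem : (Polynomial.aeval E q) (y i j) ∈ W i j :=
          hstabgen _ (hWE i j) q _ (hWy i j)
        rw [heq]
        exact Submodule.mem_iSup_of_mem (⟨i, ⟨j, hj⟩⟩ : Σ i : Fin t, {j : ℤ // j ∈ s i})
          (Submodule.mem_map_of_mem hWmem)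
    · have hne : (j - β) + α ≠ 0 := by omega
      rw [hπ₂ _ 0 _ hmemdeg hne]
      exact Submodule.zero_mem F
  -- conclude
  have hle : ℳ 0 ≤ F := by
    intro u hu
    have hu' : u ∈ Submodule.span K {x : M | ∃ (i : Fin t) (α β : ℕ),
        x = (Polynomial.X ^ α : Polynomial K) • ((D ^ β) (g i))} := by
      rw [hspan]; trivial
    have hmap : π 0 u ∈ Submodule.map (π 0) (Submodule.span K _) :=
      Submodule.mem_map_of_mem hu'
    rw [Submodule.map_span] at hmap
    have hsub : (π 0) '' {x : M | ∃ (i : Fin t) (α β : ℕ),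
        x = (Polynomial.X ^ α : Polynomial K) • ((D ^ β) (g i))} ⊆ (F : Set M) := by
      rintro v ⟨x, ⟨i, α, β, rfl⟩, rfl⟩
      rw [hXpow]
      have hgi : (σ ^ α) ((D ^ β) (g i)) = ∑ j ∈ s i, (σ ^ α) ((D ^ β) (π j (g i))) := by
        conv_lhs => rw [hs i]
        rw [map_sum, map_sum]
      rw [hgi, map_sum]
      exact Submodule.sum_mem _ fun j hj => hkey i α β j hj
    have : π 0 u ∈ F := Submodule.span_le.mpr hsub hmap
    rwa [hπ₁ 0 u hu] at this
  exact Submodule.finiteDimensional_of_le hle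

/-- Projections associated to an internal direct sum decomposition. -/
theorem aux_proj (K : Type) [Field K]
    (M : Type) [AddCommGroup M] [Module K M]
    (ℳ : ℤ → Submodule K M)
    (hdecomp : DirectSum.IsInternal ℳ) :
    ∃ π : ℤ → Module.End K M,
      (∀ j x, x ∈ ℳ j → π j x = x) ∧
      (∀ i j x, x ∈ ℳ i → i ≠ j → π j x = 0) ∧
      (∀ j x, π j x ∈ ℳ j) ∧
      (∀ x : M, ∃ s : Finset ℤ, x = ∑ j ∈ s, π j x) := by
  classical
  set e : DirectSum ℤ (fun j => ↥(ℳ j)) ≃ₗ[K] M :=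
    LinearEquiv.ofBijective (DirectSum.coeLinearMap ℳ) hdecomp with he
  refine ⟨fun j => (ℳ j).subtype ∘ₗ (DirectSum.component K ℤ (fun i => ↥(ℳ i)) j) ∘ₗ
    e.symm.toLinearMap, ?_, ?_, ?_, ?_⟩
  · intro j x hx
    simp only [LinearMap.coe_comp, Function.comp_apply, LinearEquiv.coe_coe,
      Submodule.coe_subtype]
    rw [show (DirectSum.component K ℤ (fun i => ↥(ℳ i)) j) (e.symm x) = (e.symm x) j from rfl,
      hdecomp.ofBijective_coeLinearMap_of_mem hx]
  · intro i j x hx hij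
    simp only [LinearMap.coe_comp, Function.comp_apply, LinearEquiv.coe_coe,
      Submodule.coe_subtype]
    rw [show (DirectSum.component K ℤ (fun i => ↥(ℳ i)) j) (e.symm x) = (e.symm x) j from rfl,
      hdecomp.ofBijective_coeLinearMap_of_mem_ne hij hx]
    rfl
  · intro j x
    exact ((e.symm x) j).2
  · intro x
    refine ⟨(e.symm x).support, ?_⟩
    have hx : x = DirectSum.coeLinearMap ℳ
        (∑ j ∈ (e.symm x).support, DirectSum.of _ j ((e.symm x) j)) := by
      rw [DirectSum.sum_support_of (e.symm x)]
      exact (e.apply_symm_apply x).symm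
    conv_lhs => rw [hx]
    rw [map_sum]
    exact Finset.sum_congr rfl fun j _ => by rw [DirectSum.coeLinearMap_of]; rfl

/-- For a graded holonomic generalized Eulerian `A₁(K)`-module `M` on which
multiplication by `X` is bijective, `χ(∂, M) = 0`, i.e. `dim_K ker ∂ = dim_K (M/∂M)`. -/
theorem chi_deRham_eq_zero_of_X_bijective_one_var
    (K : Type) [Field K] [CharZero K]
    (M : Type) [AddCommGroup M] [Module K M] [Module (Polynomial K) M]
    [IsScalarTower K (Polynomial K) M] [SMulCommClass K (Polynomial K) M]
    (D : Module.End K M)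
    -- Leibniz rule
    (hleib : ∀ (f : Polynomial K) (x : M),
      D (f • x) = (Polynomial.derivative f) • x + f • (D x))
    -- grading
    (ℳ : ℤ → Submodule K M)
    (hdecomp : DirectSum.IsInternal ℳ)
    (hgradeX : ∀ (j : ℤ) (x : M), x ∈ ℳ j → (Polynomial.X : Polynomial K) • x ∈ ℳ (j + 1))
    (hgradeD : ∀ (j : ℤ) (x : M), x ∈ ℳ j → D x ∈ ℳ (j - 1))
    -- generalized Eulerian: `(ε − deg z)^a z = 0` for homogeneous `z`, where `ε = X∂`
    (hGE : ∀ (j : ℤ) (z : M), z ∈ ℳ j →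
      ∃ a : ℕ, 0 < a ∧ ((mulX1 K M * D - j • 1) ^ a) z = 0)
    -- holonomic
    (hhol : IsHolonomic1 K M D)
    -- multiplication by `X` is bijective on `M`
    (hbij : Function.Bijective fun x : M => (Polynomial.X : Polynomial K) • x)
    -- finite dimensionality of the de Rham homologies
    (hfin1 : FiniteDimensional K (LinearMap.ker D))
    (hfin0 : FiniteDimensional K (M ⧸ LinearMap.range D)) :
    Module.finrank K (LinearMap.ker D) = Module.finrank K (M ⧸ LinearMap.range D) := by
  classical
  obtain ⟨π, hπ₁, hπ₂, hπ₃, hπ₄⟩ := aux_proj K M ℳ hdecomp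
  set σ : Module.End K M := mulX1 K M with hσ
  set E : Module.End K M := σ * D with hEdef
  have hσapp : ∀ x : M, σ x = (Polynomial.X : Polynomial K) • x := fun _ => rfl
  have hsup : (⨆ j, ℳ j) = ⊤ := hdecomp.submodule_iSup_eq_top
  have hzsmul : ∀ (d : ℤ) (w : M), d • w = ((d : K)) • w :=
    fun d w => (Int.cast_smul_eq_zsmul K d w).symm
  -- commuting projections with graded operators
  have hcomm : ∀ (T : Module.End K M) (d : ℤ),
      (∀ i x, x ∈ ℳ i → T x ∈ ℳ (i + d)) →
      ∀ (jj : ℤ) (m : M), π (jj + d) (T m) = T (π jj m) := by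
    intro T d hT jj m
    have hm : m ∈ ⨆ i, ℳ i := by rw [hsup]; trivial
    refine Submodule.iSup_induction ℳ (motive := fun x => π (jj + d) (T x) = T (π jj x)) hm
      ?_ ?_ ?_
    · intro i x hx
      by_cases hij : i = jj
      · subst hij
        rw [hπ₁ (i + d) _ (hT i x hx), hπ₁ i x hx]
      · rw [hπ₂ (i + d) (jj + d) _ (hT i x hx) (by omega), hπ₂ i jj x hx hij, map_zero]
    · show π (jj + d) (T 0) = T (π jj 0)
      simp
    · intro x z hx hz
      show π (jj + d) (T (x + z)) = T (π jj (x + z))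
      simp only [map_add, hx, hz]
  have hgD' : ∀ (i : ℤ) (x : M), x ∈ ℳ i → D x ∈ ℳ (i + -1) := by
    intro i x hx
    rw [← sub_eq_add_neg]
    exact hgradeD i x hx
  have hcommD : ∀ m : M, π (-1) (D m) = D (π 0 m) := by
    intro m
    have h := hcomm D (-1) hgD' 0 m
    norm_num at h
    exact h
  have hcommX0 : ∀ m : M, π 0 (σ m) = σ (π (-1) m) := by
    intro m
    have h := hcomm σ 1 (fun i x hx => hgradeX i x hx) (-1) m
    norm_num at h
    exact h
  -- E preserves degrees
  have hEmem : ∀ (j : ℤ) (x : M), x ∈ ℳ j → E x ∈ ℳ j := by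
    intro j x hx
    have h1 : E x = σ (D x) := by rw [hEdef, Module.End.mul_apply]
    rw [h1, hσapp]
    have := hgradeX (j - 1) _ (hgradeD j x hx)
    rwa [sub_add_cancel] at this
  -- injectivity on nonzero degrees
  have hinjaux : ∀ (j : ℤ), j ≠ 0 → ∀ (a : ℕ) (z : M), z ∈ ℳ j → E z = 0 →
      ((E - j • 1) ^ a) z = 0 → z = 0 := by
    intro j hj
    have hjK : ((j : K)) ≠ 0 := Int.cast_ne_zero.mpr hj
    intro a
    induction a with
    | zero => intro z _ _ h; simpa using h
    | succ a ih =>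
      intro z hz hEz h
      have hy : ((E - j • 1) ^ a) ((E - j • 1) z) = 0 := by
        rw [← Module.End.mul_apply, ← pow_succ]; exact h
      have hyval : (E - j • 1) z = -((j : K) • z) := by
        rw [LinearMap.sub_apply, hEz, LinearMap.smul_apply, Module.End.one_apply, hzsmul,
          zero_sub]
      have hymem : (E - j • 1) z ∈ ℳ j := by
        rw [hyval]; exact Submodule.neg_mem _ (Submodule.smul_mem _ _ hz)
      have hyE : E ((E - j • 1) z) = 0 := by
        rw [hyval, map_neg, map_smul, hEz, smul_zero, neg_zero]
      have := ih _ hymem hyE hy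
      rw [hyval, neg_eq_zero] at this
      exact (smul_eq_zero.mp this).resolve_left hjK
  have hinj : ∀ (j : ℤ), j ≠ 0 → ∀ z ∈ ℳ j, D z = 0 → z = 0 := by
    intro j hj z hz hDz
    obtain ⟨a, -, ha⟩ := hGE j z hz
    have hEz : E z = 0 := by rw [hEdef, Module.End.mul_apply, hDz, map_zero]
    exact hinjaux j hj a z hz hEz ha
  -- surjectivity of E on nonzero degrees
  have hsurjaux : ∀ (j : ℤ), j ≠ 0 → ∀ (a : ℕ) (z : M), z ∈ ℳ j →
      ((E - j • 1) ^ a) z = 0 → ∃ w ∈ ℳ j, E w = z := by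
    intro j hj
    have hjK : ((j : K)) ≠ 0 := Int.cast_ne_zero.mpr hj
    intro a
    induction a with
    | zero =>
      intro z _ h
      simp only [pow_zero, Module.End.one_apply] at h
      exact ⟨0, Submodule.zero_mem _, by rw [h, map_zero]⟩
    | succ a ih =>
      intro z hz h
      have hy : ((E - j • 1) ^ a) ((E - j • 1) z) = 0 := by
        rw [← Module.End.mul_apply, ← pow_succ]; exact h
      have hymem : (E - j • 1) z ∈ ℳ j := by
        have hval : (E - j • 1) z = E z - (j : K) • z := by
          rw [LinearMap.sub_apply, LinearMap.smul_apply, Module.End.one_apply, hzsmul]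
        rw [hval]
        exact Submodule.sub_mem _ (hEmem j z hz) (Submodule.smul_mem _ _ hz)
      obtain ⟨w', hw'mem, hw'⟩ := ih _ hymem hy
      refine ⟨(j : K)⁻¹ • (z - w'), Submodule.smul_mem _ _ (Submodule.sub_mem _ hz hw'mem), ?_⟩
      rw [map_smul, map_sub, hw', LinearMap.sub_apply, LinearMap.smul_apply,
        Module.End.one_apply, hzsmul]
      rw [show E z - (E z - (j : K) • z) = (j : K) • z by abel]
      rw [inv_smul_smul₀ hjK]
  -- D is surjective onto each degree ≠ -1
  have hDsurj : ∀ (i : ℤ), i ≠ -1 → ∀ u ∈ ℳ i, ∃ w ∈ ℳ (i + 1), D w = u := by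
    intro i hi u hu
    have hz : σ u ∈ ℳ (i + 1) := by rw [hσapp]; exact hgradeX i u hu
    obtain ⟨a, -, ha⟩ := hGE (i + 1) (σ u) hz
    obtain ⟨w, hwmem, hw⟩ := hsurjaux (i + 1) (by omega) a (σ u) hz ha
    refine ⟨w, hwmem, ?_⟩
    have : σ (D w) = σ u := by rw [← Module.End.mul_apply, ← hEdef, hw]
    rw [hσapp, hσapp] at this
    exact hbij.injective this
  -- the kernel lives in degree 0
  have hker : ∀ m : M, D m = 0 → m ∈ ℳ 0 := by
    intro m hm
    obtain ⟨s, hs⟩ := hπ₄ m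
    have hz : ∀ j : ℤ, j ≠ 0 → π j m = 0 := by
      intro j hj
      refine hinj j hj _ (hπ₃ j m) ?_
      have h1 : D (π j m) = π (j + -1) (D m) := (hcomm D (-1) hgD' j m).symm
      rw [h1, hm, map_zero]
    have hsum : m = ∑ j ∈ s, if j = 0 then π 0 m else 0 := by
      conv_lhs => rw [hs]
      refine Finset.sum_congr rfl fun j _ => ?_
      by_cases hj : j = 0
      · rw [hj, if_pos rfl]
      · rw [if_neg hj, hz j hj]
    rw [Finset.sum_ite_eq' s 0 (fun _ => π 0 m)] at hsum
    by_cases h0 : (0 : ℤ) ∈ s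
    · rw [if_pos h0] at hsum; rw [hsum]; exact hπ₃ 0 m
    · rw [if_neg h0] at hsum; rw [hsum]; exact Submodule.zero_mem _
  -- cokernel is concentrated in degree -1
  have hcoker : ∀ m : M, m - π (-1) m ∈ LinearMap.range D := by
    intro m
    have hm : m ∈ ⨆ i, ℳ i := by rw [hsup]; trivial
    refine Submodule.iSup_induction ℳ (motive := fun x => x - π (-1) x ∈ LinearMap.range D) hm
      ?_ ?_ ?_
    · intro i x hx
      by_cases hi : i = -1
      · subst hi
        rw [hπ₁ (-1) x hx, sub_self]
        exact Submodule.zero_mem _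
      · rw [hπ₂ i (-1) x hx hi, sub_zero]
        obtain ⟨w, -, hw⟩ := hDsurj i hi x hx
        exact ⟨w, hw⟩
    · show (0 : M) - π (-1) 0 ∈ LinearMap.range D
      simp
    · intro x z hx hz
      have : x + z - π (-1) (x + z) = (x - π (-1) x) + (z - π (-1) z) := by
        rw [map_add]; abel
      rw [this]
      exact Submodule.add_mem _ hx hz
  -- restricted maps
  have hm0 : ∀ x : M, x ∈ ℳ 0 → D x ∈ ℳ (-1) := by
    intro x hx
    have := hgradeD 0 x hx
    norm_num at this
    exact this
  set D₀ : ↥(ℳ 0) →ₗ[K] ↥(ℳ (-1)) := D.restrict hm0 with hD₀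
  -- the kernel as a submodule
  have hkerEq : LinearMap.ker D = Submodule.map (ℳ 0).subtype (LinearMap.ker D₀) := by
    apply le_antisymm
    · intro m hm
      rw [LinearMap.mem_ker] at hm
      have hm0' := hker m hm
      refine Submodule.mem_map.mpr ⟨⟨m, hm0'⟩, ?_, rfl⟩
      rw [LinearMap.mem_ker]
      exact Subtype.ext (by rw [LinearMap.restrict_coe_apply]; exact hm)
    · rintro _ ⟨y, hy, rfl⟩
      have hy' : D₀ y = 0 := hy
      have h2 := congrArg Subtype.val hy'
      rw [LinearMap.restrict_coe_apply] at h2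
      exact LinearMap.mem_ker.mpr h2
  -- the X-isomorphism between degrees -1 and 0
  have hmX : ∀ x : M, x ∈ ℳ (-1) → σ x ∈ ℳ 0 := by
    intro x hx
    rw [hσapp]
    have := hgradeX (-1) x hx
    norm_num at this
    exact this
  set σ' : ↥(ℳ (-1)) →ₗ[K] ↥(ℳ 0) := σ.restrict hmX with hσ'
  have hXbij : Function.Bijective σ' := by
    constructor
    · intro u v huv
      have h1 := congrArg Subtype.val huv
      rw [LinearMap.restrict_coe_apply, LinearMap.restrict_coe_apply, hσapp, hσapp] at h1
      exact Subtype.ext (hbij.injective h1)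
    · intro u
      obtain ⟨m, hm⟩ := hbij.surjective (u : M)
      refine ⟨⟨π (-1) m, hπ₃ (-1) m⟩, Subtype.ext ?_⟩
      rw [LinearMap.restrict_coe_apply, ← hcommX0]
      have hσm : σ m = (u : M) := by rw [hσapp]; exact hm
      rw [hσm, hπ₁ 0 _ u.2]
  set Xequiv : ↥(ℳ (-1)) ≃ₗ[K] ↥(ℳ 0) := LinearEquiv.ofBijective σ' hXbij with hXe
  -- finite dimensionality
  haveI hfd0 : FiniteDimensional K (ℳ 0) :=
    aux_fd K M D hleib ℳ hgradeX hgradeD hGE π hπ₁ hπ₂ hπ₃ hπ₄ hhol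
  haveI hfdm1 : FiniteDimensional K (ℳ (-1)) := Xequiv.symm.finiteDimensional
  -- the quotient map
  set φ : ↥(ℳ (-1)) →ₗ[K] M ⧸ LinearMap.range D :=
    (LinearMap.range D).mkQ ∘ₗ (ℳ (-1)).subtype with hφ
  have hφsurj : Function.Surjective φ := by
    intro c
    obtain ⟨m, rfl⟩ := (LinearMap.range D).mkQ_surjective c
    refine ⟨⟨π (-1) m, hπ₃ (-1) m⟩, ?_⟩
    show (LinearMap.range D).mkQ (π (-1) m) = (LinearMap.range D).mkQ m
    rw [Submodule.mkQ_apply, Submodule.mkQ_apply, Submodule.Quotient.eq]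
    have : π (-1) m - m = -(m - π (-1) m) := by abel
    rw [this]
    exact Submodule.neg_mem _ (hcoker m)
  have hφker : LinearMap.ker φ = LinearMap.range D₀ := by
    apply le_antisymm
    · intro u hu
      rw [LinearMap.mem_ker] at hu
      have hu' : (u : M) ∈ LinearMap.range D := by
        have h1 : (LinearMap.range D).mkQ (u : M) = 0 := hu
        rwa [Submodule.mkQ_apply, Submodule.Quotient.mk_eq_zero] at h1
      obtain ⟨m, hm⟩ := hu'
      refine ⟨⟨π 0 m, hπ₃ 0 m⟩, Subtype.ext ?_⟩
      rw [LinearMap.restrict_coe_apply, ← hcommD, hm, hπ₁ (-1) _ u.2]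
    · rintro _ ⟨x, rfl⟩
      rw [LinearMap.mem_ker, hφ, LinearMap.comp_apply, Submodule.coe_subtype,
        Submodule.mkQ_apply, Submodule.Quotient.mk_eq_zero]
      exact ⟨(x : M), by rw [LinearMap.restrict_coe_apply]⟩
  -- finrank computations
  have e1 : Module.finrank K (LinearMap.ker D) = Module.finrank K (LinearMap.ker D₀) := by
    rw [hkerEq]
    exact (LinearEquiv.finrank_eq (Submodule.equivMapOfInjective (ℳ 0).subtype
      (Submodule.injective_subtype _) (LinearMap.ker D₀))).symm
  have e2 : Module.finrank K (M ⧸ LinearMap.range D) =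
      Module.finrank K (↥(ℳ (-1)) ⧸ LinearMap.range D₀) := by
    have h := LinearMap.quotKerEquivOfSurjective φ hφsurj
    rw [hφker] at h
    exact h.finrank_eq.symm
  have e3 := LinearMap.finrank_range_add_finrank_ker D₀
  have e4 := Submodule.finrank_quotient_add_finrank (LinearMap.range D₀)
  have e5 : Module.finrank K (ℳ (-1)) = Module.finrank K (ℳ 0) := Xequiv.finrank_eq
  omega
end

section
/- Let M be a graded holonomic A₁(K)-module such that multiplication by X on M is bijective (M = M_X), and suppose there exists an integer a such that the shifted module M(a) is generalized Eulerian, i.e. for every homogeneous z ∈ M there is a positive integer b with (ε − (deg z − a))^b·z = 0. Assume ker ∂ and M/∂M are finite dimensional over K. Then χ(∂, M) = 0. -/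
/-- For a graded holonomic `A₁(K)`-module `M` on which multiplication by
`X` is bijective and such that some shift `M(a)` is generalized Eulerian, `χ(∂, M) = 0`. -/
theorem chi_deRham_eq_zero_of_X_bijective_shift_gen_eulerian
    (K : Type) [Field K] [CharZero K]
    (M : Type) [AddCommGroup M] [Module K M] [Module (Polynomial K) M]
    [IsScalarTower K (Polynomial K) M] [SMulCommClass K (Polynomial K) M]
    (D : Module.End K M)
    -- Leibniz rule
    (hleib : ∀ (f : Polynomial K) (x : M),
      D (f • x) = (Polynomial.derivative f) • x + f • (D x))
    -- grading
    (ℳ : ℤ → Submodule K M)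
    (hdecomp : DirectSum.IsInternal ℳ)
    (hgradeX : ∀ (j : ℤ) (x : M), x ∈ ℳ j → (Polynomial.X : Polynomial K) • x ∈ ℳ (j + 1))
    (hgradeD : ∀ (j : ℤ) (x : M), x ∈ ℳ j → D x ∈ ℳ (j - 1))
    -- some shift `M(a)` is generalized Eulerian:
    -- `(ε − (deg z − a))^b z = 0` for homogeneous `z`, where `ε = X∂`
    (hGE : ∃ a : ℤ, ∀ (j : ℤ) (z : M), z ∈ ℳ j →
      ∃ b : ℕ, 0 < b ∧ ((mulX1 K M * D - (j - a) • 1) ^ b) z = 0)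
    -- holonomic
    (hhol : IsHolonomic1 K M D)
    -- multiplication by `X` is bijective on `M`
    (hbij : Function.Bijective fun x : M => (Polynomial.X : Polynomial K) • x)
    -- finite dimensionality of the de Rham homologies
    (hfin1 : FiniteDimensional K (LinearMap.ker D))
    (hfin0 : FiniteDimensional K (M ⧸ LinearMap.range D)) :
    Module.finrank K (LinearMap.ker D) = Module.finrank K (M ⧸ LinearMap.range D) := by
  classical
  obtain ⟨a, hGE⟩ := hGE
  set X : Module.End K M := mulX1 K M with hXdef
  have hXapp : ∀ x : M, X x = (Polynomial.X : Polynomial K) • x := fun _ => rfl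
  have hXbij : Function.Bijective ⇑X := hbij
  have hXinj : ∀ u v : M, X u = X v → u = v := fun u v h => hXbij.1 h
  -- the linear equivalence coming from multiplication by X
  let eX : M ≃ₗ[K] M := LinearEquiv.ofBijective (X : M →ₗ[K] M) hXbij
  have heX : ∀ x : M, eX x = X x := fun _ => rfl
  -- projections onto graded components
  let E := LinearEquiv.ofBijective (DirectSum.coeLinearMap ℳ) hdecomp
  let π : ℤ → (M →ₗ[K] M) := fun j =>
    (ℳ j).subtype ∘ₗ (DFinsupp.lapply j) ∘ₗ E.symm.toLinearMap
  have hπ_mem : ∀ j x, π j x ∈ ℳ j := fun j x => (E.symm x j).2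
  have hπ_same : ∀ (j : ℤ) (x : M), x ∈ ℳ j → π j x = x := by
    intro j x hx
    have := hdecomp.ofBijective_coeLinearMap_of_mem hx
    exact congrArg Subtype.val this
  have hπ_ne : ∀ (j k : ℤ) (x : M), x ∈ ℳ k → k ≠ j → π j x = 0 := by
    intro j k x hx hkj
    have := hdecomp.ofBijective_coeLinearMap_of_mem_ne hkj hx
    exact congrArg Subtype.val this
  have hπ_all : ∀ x : M, (∀ k, π k x = 0) → x = 0 := by
    intro x h
    have h2 : E.symm x = 0 := by
      refine DFinsupp.ext fun k => ?_
      rw [DFinsupp.zero_apply]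
      exact Subtype.ext (h k)
    exact (LinearEquiv.map_eq_zero_iff E.symm).mp h2
  have htop : ∀ x : M, x ∈ ⨆ i, ℳ i := by
    intro x; rw [hdecomp.submodule_iSup_eq_top]; trivial
  -- commutation of projections with D and X
  have hπD : ∀ (k : ℤ) (x : M), π (k - 1) (D x) = D (π k x) := by
    intro k x
    refine Submodule.iSup_induction (motive := fun x => π (k - 1) (D x) = D (π k x)) ℳ (htop x)
      ?_ (by simp) ?_
    · intro l y hy
      by_cases hl : l = k
      · subst hl
        rw [hπ_same _ y hy, hπ_same _ _ (hgradeD _ y hy)]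
      · rw [hπ_ne k l y hy hl, hπ_ne (k - 1) (l - 1) _ (hgradeD l y hy) (by omega), map_zero]
    · intro x y hx hy
      simp only [map_add, hx, hy]
  have hπX : ∀ (k : ℤ) (x : M), π (k + 1) (X x) = X (π k x) := by
    intro k x
    refine Submodule.iSup_induction (motive := fun x => π (k + 1) (X x) = X (π k x)) ℳ (htop x)
      ?_ (by simp) ?_
    · intro l y hy
      have hXy : X y ∈ ℳ (l + 1) := hgradeX l y hy
      by_cases hl : l = k
      · subst hl
        rw [hπ_same _ y hy, hπ_same _ _ hXy]
      · rw [hπ_ne k l y hy hl, hπ_ne (k + 1) (l + 1) _ hXy (by omega), map_zero]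
    · intro x y hx hy
      simp only [map_add, hx, hy]
  have hπ_single : ∀ (j : ℤ) (x : M), (∀ k, k ≠ j → π k x = 0) → x ∈ ℳ j := by
    intro j x h
    have h2 : x - π j x = 0 := by
      apply hπ_all
      intro k
      by_cases hk : k = j
      · subst hk
        rw [map_sub, hπ_same k _ (hπ_mem k x), sub_self]
      · rw [map_sub, h k hk, hπ_ne k j _ (hπ_mem j x) (Ne.symm hk), sub_self]
    have := sub_eq_zero.mp h2
    rw [this]
    exact hπ_mem j x
  have hπ_rest : ∀ (j : ℤ) (x : M), x - π j x ∈ ⨆ (k) (_ : k ≠ j), ℳ k := by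
    intro j x
    refine Submodule.iSup_induction (motive := fun x => x - π j x ∈ ⨆ (k) (_ : k ≠ j), ℳ k) ℳ
      (htop x) ?_ (by simp) ?_
    · intro l y hy
      by_cases hl : l = j
      · subst hl
        rw [hπ_same l y hy, sub_self]
        exact Submodule.zero_mem _
      · rw [hπ_ne j l y hy hl, sub_zero]
        exact Submodule.mem_iSup_of_mem l (Submodule.mem_iSup_of_mem hl hy)
    · intro u v hu hv
      have : u + v - π j (u + v) = (u - π j u) + (v - π j v) := by
        rw [map_add]; abel
      rw [this]
      exact Submodule.add_mem _ hu hv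
  -- injectivity of ε = X∘D on pieces of degree ≠ a
  have hinj : ∀ (j : ℤ), j ≠ a → ∀ z ∈ ℳ j, X (D z) = 0 → z = 0 := by
    intro j hj z hz hXDz
    obtain ⟨b, hb, hnil⟩ := hGE j z hz
    set c : ℤ := j - a with hc
    set N : Module.End K M := mulX1 K M * D - c • 1 with hN
    have hNz : N z = (-c) • z := by
      rw [hN]
      rw [LinearMap.sub_apply, LinearMap.smul_apply, Module.End.one_apply,
        Module.End.mul_apply]
      rw [← hXdef, hXDz, zero_sub, neg_smul]
    have hpow : ∀ n : ℕ, (N ^ n) z = ((-c) ^ n) • z := by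
      intro n
      induction n with
      | zero => simp
      | succ n ih =>
        rw [pow_succ, Module.End.mul_apply, hNz, map_zsmul, ih, smul_smul, ← pow_succ']
    rw [hpow b] at hnil
    have hcast : (((-c) ^ b : ℤ) : K) • z = 0 := by
      rw [Int.cast_smul_eq_zsmul]; exact hnil
    have hne : (((-c) ^ b : ℤ) : K) ≠ 0 := by
      rw [Int.cast_ne_zero]
      exact pow_ne_zero _ (by omega)
    exact (smul_eq_zero.mp hcast).resolve_left hne
  -- ====== finite dimensionality of the graded pieces, from holonomicity ======
  obtain ⟨t, g, C, hgen, hbound⟩ := hhol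
  set SS : ℕ → Set M := fun n => {x : M | ∃ (i : Fin t) (α β : ℕ), α + β ≤ n ∧
    x = (Polynomial.X ^ α : Polynomial K) • ((D ^ β) (g i))} with hSS
  set F : ℕ → Submodule K M := fun n => Submodule.span K (SS n) with hF
  have hSSfin : ∀ n, (SS n).Finite := by
    intro n
    have : SS n ⊆ Set.range (fun p : Fin t × Fin (n + 1) × Fin (n + 1) =>
        (Polynomial.X ^ (p.2.1 : ℕ) : Polynomial K) • ((D ^ (p.2.2 : ℕ)) (g p.1))) := by
      rintro x ⟨i, α, β, hle, rfl⟩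
      exact ⟨(i, ⟨α, by omega⟩, ⟨β, by omega⟩), rfl⟩
    exact Set.Finite.subset (Set.finite_range _) this
  have hFfin : ∀ n, FiniteDimensional K (F n) := fun n =>
    FiniteDimensional.span_of_finite K (hSSfin n)
  have hFmono : ∀ {m n : ℕ}, m ≤ n → F m ≤ F n := by
    intro m n hmn
    apply Submodule.span_mono
    rintro x ⟨i, α, β, hle, rfl⟩
    exact ⟨i, α, β, by omega, rfl⟩
  have hmemF : ∀ x : M, ∃ n, x ∈ F n := by
    intro x
    have hset : {x : M | ∃ (i : Fin t) (α β : ℕ),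
        x = (Polynomial.X ^ α : Polynomial K) • ((D ^ β) (g i))} = ⋃ n, SS n := by
      ext y
      constructor
      · rintro ⟨i, α, β, rfl⟩
        exact Set.mem_iUnion.mpr ⟨α + β, i, α, β, le_refl _, rfl⟩
      · rintro hy
        obtain ⟨n, i, α, β, _, rfl⟩ := Set.mem_iUnion.mp hy
        exact ⟨i, α, β, rfl⟩
    have : (⊤ : Submodule K M) = ⨆ n, F n := by
      rw [← hgen, hset, Submodule.span_iUnion]
    have hx : x ∈ ⨆ n, F n := by rw [← this]; trivial
    exact (Submodule.mem_iSup_of_directed F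
      (fun i j => ⟨max i j, hFmono (le_max_left _ _), hFmono (le_max_right _ _)⟩)).mp hx
  have hFX : ∀ (n : ℕ) (x : M), x ∈ F n → X x ∈ F (n + 1) := by
    intro n x hx
    have hmap : Submodule.map (X : M →ₗ[K] M) (F n) ≤ F (n + 1) := by
      rw [hF, Submodule.map_span]
      apply Submodule.span_mono
      rintro y ⟨x, ⟨i, α, β, hle, rfl⟩, rfl⟩
      refine ⟨i, α + 1, β, by omega, ?_⟩
      rw [hXapp, smul_smul, ← pow_succ']
    exact hmap ⟨x, hx, rfl⟩
  -- every graded piece is finite dimensional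
  have hfd : ∀ j : ℤ, FiniteDimensional K (ℳ j) := by
    intro j
    rw [show (FiniteDimensional K (ℳ j)) = Module.Finite K (ℳ j) from rfl,
      ← Module.rank_lt_aleph0_iff]
    have hrank : Module.rank K (ℳ j) ≤ (C : Cardinal) := by
      apply rank_le
      intro s hs
      -- the family of coerced vectors in M
      set u : s → M := fun i => ((i : ℳ j) : M) with hu
      have hu_indep : LinearIndependent K u := by
        have := hs.map' (ℳ j).subtype (Submodule.ker_subtype (ℳ j))
        exact this
      have hu_mem : ∀ i : s, u i ∈ ℳ j := fun i => ((i : ℳ j)).2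
      set W : Submodule K M := Submodule.span K (Set.range u) with hW
      haveI : FiniteDimensional K W :=
        FiniteDimensional.span_of_finite K (Set.finite_range u)
      have hWrank : Module.finrank K W = s.card := by
        rw [hW, finrank_span_eq_card hu_indep, Fintype.card_coe]
      have hWj : W ≤ ℳ j := by
        rw [hW, Submodule.span_le]
        rintro y ⟨i, rfl⟩
        exact hu_mem i
      obtain ⟨n₀, hn₀⟩ : ∃ n₀ : ℕ, ∀ i : s, u i ∈ F n₀ := by
        choose f hf using fun i : s => hmemF (u i)
        exact ⟨Finset.univ.sup f, fun i => hFmono (Finset.le_sup (Finset.mem_univ i)) (hf i)⟩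
      have hWF : W ≤ F n₀ := by
        rw [hW, Submodule.span_le]
        rintro y ⟨i, rfl⟩
        exact hn₀ i
      -- shifted copies
      set Wi : ℕ → Submodule K M := fun i =>
        Submodule.map (((eX ^ i : M ≃ₗ[K] M) : M →ₗ[K] M)) W with hWi
      have hWi_rank : ∀ i, Module.finrank K (Wi i) = s.card := by
        intro i
        rw [hWi]
        rw [LinearEquiv.finrank_map_eq (eX ^ i) W, hWrank]
      haveI hWi_fin : ∀ i, FiniteDimensional K (Wi i) := by
        intro i
        rw [hWi]
        exact Module.Finite.map W _
      have heXpow : ∀ (i : ℕ) (x : M),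
          ((eX ^ (i + 1) : M ≃ₗ[K] M) : M →ₗ[K] M) x
            = X (((eX ^ i : M ≃ₗ[K] M) : M →ₗ[K] M) x) := by
        intro i x
        simp only [LinearEquiv.coe_coe]
        rw [pow_succ']
        rfl
      have hWi_deg : ∀ i : ℕ, Wi i ≤ ℳ (j + i) := by
        intro i
        induction i with
        | zero =>
          rintro y ⟨x, hx, rfl⟩
          simpa using hWj hx
        | succ i ih =>
          rintro y ⟨x, hx, rfl⟩
          have h1 : ((eX ^ i) x : M) ∈ ℳ (j + i) := ih ⟨x, hx, rfl⟩
          have h2 := hgradeX (j + i) _ h1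
          have h3 : ((eX ^ (i + 1)) x : M) = X ((eX ^ i) x) := heXpow i x
          have : (X ((eX ^ i) x) : M) ∈ ℳ (j + i + 1) := h2
          have hcast : (j + (i : ℤ) + 1) = (j + ((i : ℕ) + 1 : ℕ) : ℤ) := by push_cast; ring
          rw [hcast] at this
          show ((eX ^ (i + 1)) x : M) ∈ ℳ (j + ((i : ℕ) + 1 : ℕ))
          rw [h3]
          exact this
      have hWi_F : ∀ i : ℕ, Wi i ≤ F (n₀ + i) := by
        intro i
        induction i with
        | zero =>
          rintro y ⟨x, hx, rfl⟩
          simpa using hWF hx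
        | succ i ih =>
          rintro y ⟨x, hx, rfl⟩
          have h1 : ((eX ^ i) x : M) ∈ F (n₀ + i) := ih ⟨x, hx, rfl⟩
          have h2 := hFX _ _ h1
          rw [heXpow i x]
          exact h2
      -- the towers
      set T : ℕ → Submodule K M := fun N => Nat.rec (Wi 0) (fun N TN => TN ⊔ Wi (N + 1)) N
        with hT
      have hT_succ : ∀ N, T (N + 1) = T N ⊔ Wi (N + 1) := fun N => rfl
      have hT_F : ∀ N, T N ≤ F (n₀ + N) := by
        intro N
        induction N with
        | zero => exact hWi_F 0
        | succ N ih =>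
          rw [hT_succ]
          exact sup_le (le_trans ih (hFmono (by omega))) (hWi_F (N + 1))
      have hT_le_bi : ∀ N : ℕ, T N ≤ ⨆ (k : ℤ) (_ : k ≤ j + (N : ℤ)), ℳ k := by
        intro N
        induction N with
        | zero =>
          refine le_trans (hWi_deg 0) ?_
          exact le_iSup₂_of_le (j + ((0 : ℕ) : ℤ)) (by omega) (le_refl _)
        | succ N ih =>
          rw [hT_succ]
          apply sup_le
          · refine le_trans ih ?_
            exact iSup₂_le fun k hk => le_iSup₂_of_le k (by omega) (le_refl _)
          · refine le_trans (hWi_deg (N + 1)) ?_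
            exact le_iSup₂_of_le (j + ((N + 1 : ℕ) : ℤ)) (by omega) (le_refl _)
      have hT_disj : ∀ N : ℕ, Disjoint (T N) (Wi (N + 1)) := by
        intro N
        have h1 : T N ≤ ⨆ (k : ℤ) (_ : k ≠ j + (N : ℤ) + 1), ℳ k := by
          refine le_trans (hT_le_bi N) ?_
          exact iSup₂_le fun k hk => le_iSup₂_of_le k (by omega) (le_refl _)
        have h2 := hdecomp.submodule_iSupIndep (j + (N : ℤ) + 1)
        have h3 : Wi (N + 1) ≤ ℳ (j + (N : ℤ) + 1) := by
          refine le_trans (hWi_deg (N + 1)) ?_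
          have : (j + ((N + 1 : ℕ) : ℤ)) = j + (N : ℤ) + 1 := by push_cast; ring
          rw [this]
        exact Disjoint.mono h1 h3 h2.symm
      haveI hT_fin : ∀ N, FiniteDimensional K (T N) := by
        intro N
        haveI := hFfin (n₀ + N)
        exact Submodule.finiteDimensional_of_le (hT_F N)
      have hT_rank : ∀ N : ℕ, Module.finrank K (T N) = s.card * (N + 1) := by
        intro N
        induction N with
        | zero => exact (hWi_rank 0).trans (by ring)
        | succ N ih =>
          haveI := hT_fin N
          haveI := hWi_fin (N + 1)
          have hsum := Submodule.finrank_sup_add_finrank_inf_eq (T N) (Wi (N + 1))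
          rw [(hT_disj N).eq_bot, finrank_bot, add_zero, ih, hWi_rank (N + 1)] at hsum
          rw [hT_succ]
          rw [hsum]
          ring
      have hfinal : ∀ N : ℕ, s.card * (N + 1) ≤ C * (n₀ + N + 1) := by
        intro N
        haveI := hFfin (n₀ + N)
        calc s.card * (N + 1) = Module.finrank K (T N) := (hT_rank N).symm
          _ ≤ Module.finrank K (F (n₀ + N)) := Submodule.finrank_mono (hT_F N)
          _ ≤ C * ((n₀ + N) + 1) := hbound (n₀ + N)
          _ = C * (n₀ + N + 1) := by ring
      by_contra hC
      push_neg at hC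
      have hm : C + 1 ≤ s.card := hC
      have hkey := hfinal (C * n₀ + C)
      have hkey2 : (C + 1) * (C * n₀ + C + 1) ≤ s.card * (C * n₀ + C + 1) :=
        Nat.mul_le_mul_right _ hm
      have h3 := le_trans hkey2 hkey
      have e1 : (C + 1) * (C * n₀ + C + 1) = C * (C * n₀ + C + 1) + (C * n₀ + C + 1) := by ring
      have e2 : C * (n₀ + (C * n₀ + C) + 1) = C * (C * n₀ + C + 1) + C * n₀ := by ring
      rw [e1, e2] at h3
      linarith
    exact lt_of_le_of_lt hrank (Cardinal.nat_lt_aleph0 C)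
  -- ====== main argument ======
  have hεmem : ∀ (jj : ℤ) (x : M), x ∈ ℳ jj → X (D x) ∈ ℳ jj := by
    intro jj x hx
    have h := hgradeX (jj - 1) _ (hgradeD jj x hx)
    have heq : jj - 1 + 1 = jj := by omega
    rw [heq] at h
    exact h
  have hsurj : ∀ (jj : ℤ), jj ≠ a → ∀ y ∈ ℳ jj, ∃ z ∈ ℳ jj, X (D z) = y := by
    intro jj hjj y hy
    haveI := hfd jj
    set f : ℳ jj →ₗ[K] ℳ jj :=
      (X ∘ₗ (D : M →ₗ[K] M)).restrict (fun x hx => hεmem jj x hx) with hf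
    have hfinj : Function.Injective f := by
      intro u v huv
      have hval : X (D (u : M)) = X (D (v : M)) := by
        have := congrArg Subtype.val huv
        rwa [LinearMap.restrict_coe_apply, LinearMap.restrict_coe_apply] at this
      have hsub : X (D ((u : M) - (v : M))) = 0 := by
        rw [map_sub, map_sub, hval, sub_self]
      have := hinj jj hjj _ (Submodule.sub_mem _ u.2 v.2) hsub
      exact Subtype.ext (sub_eq_zero.mp this)
    have hfsurj := LinearMap.injective_iff_surjective.mp hfinj
    obtain ⟨z, hz⟩ := hfsurj ⟨y, hy⟩
    refine ⟨(z : M), z.2, ?_⟩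
    have := congrArg Subtype.val hz
    rwa [LinearMap.restrict_coe_apply] at this
  have hDrange : ∀ k : ℤ, k ≠ a - 1 → ℳ k ≤ LinearMap.range D := by
    intro k hk y hy
    have hjj : k + 1 ≠ a := by omega
    obtain ⟨z, hzmem, hz⟩ := hsurj (k + 1) hjj (X y) (hgradeX k y hy)
    exact ⟨z, hXinj _ _ hz⟩
  -- kernel is concentrated in degree a
  have hkera : LinearMap.ker D ≤ ℳ a := by
    intro z hz
    rw [LinearMap.mem_ker] at hz
    apply hπ_single a z
    intro k hk
    have h1 : D (π k z) = 0 := by rw [← hπD k z, hz, map_zero]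
    exact hinj k hk (π k z) (hπ_mem k z) (by rw [h1, map_zero])
  haveI := hfd a
  haveI := hfd (a - 1)
  set Da : ℳ a →ₗ[K] ℳ (a - 1) := D.restrict (fun x hx => hgradeD a x hx) with hDa
  have hkereq : Module.finrank K (LinearMap.ker D) = Module.finrank K (LinearMap.ker Da) := by
    have h1 : LinearMap.ker Da = Submodule.comap (ℳ a).subtype (LinearMap.ker D) := by
      ext x
      rw [LinearMap.mem_ker, Submodule.mem_comap, LinearMap.mem_ker]
      constructor
      · intro h
        have := congrArg Subtype.val h
        rwa [LinearMap.restrict_coe_apply] at this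
      · intro h
        apply Subtype.ext
        rw [LinearMap.restrict_coe_apply]
        exact h
    rw [h1]
    exact ((Submodule.comapSubtypeEquivOfLe hkera).finrank_eq).symm
  -- cokernel
  set φ : ℳ (a - 1) →ₗ[K] M ⧸ LinearMap.range D :=
    (LinearMap.range D).mkQ ∘ₗ (ℳ (a - 1)).subtype with hφ
  have hZle : (⨆ (k : ℤ) (_ : k ≠ a - 1), ℳ k) ≤ LinearMap.range D :=
    iSup_le fun k => iSup_le fun hk => hDrange k hk
  have hφsurj : Function.Surjective φ := by
    intro ybar
    obtain ⟨m, rfl⟩ := Submodule.mkQ_surjective _ ybar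
    refine ⟨⟨π (a - 1) m, hπ_mem _ m⟩, ?_⟩
    show Submodule.Quotient.mk (π (a - 1) m) = Submodule.Quotient.mk m
    rw [Submodule.Quotient.eq]
    have : π (a - 1) m - m = -(m - π (a - 1) m) := by abel
    rw [this]
    exact Submodule.neg_mem _ (hZle (hπ_rest (a - 1) m))
  have hφker : LinearMap.ker φ = LinearMap.range Da := by
    ext x
    rw [LinearMap.mem_ker]
    constructor
    · intro hx
      have hxr : (x : M) ∈ LinearMap.range D := by
        have h0 : Submodule.Quotient.mk (p := LinearMap.range D) (x : M) = 0 := hx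
        rwa [Submodule.Quotient.mk_eq_zero] at h0
      obtain ⟨w, hw⟩ := hxr
      refine ⟨⟨π a w, hπ_mem a w⟩, ?_⟩
      apply Subtype.ext
      rw [LinearMap.restrict_coe_apply]
      show D (π a w) = (x : M)
      rw [← hπD a w, hw, hπ_same (a - 1) _ x.2]
    · rintro ⟨w, rfl⟩
      have hval : ((Da w : ℳ (a - 1)) : M) = D (w : M) := LinearMap.restrict_coe_apply _ _ _
      show Submodule.Quotient.mk (p := LinearMap.range D) ((Da w : ℳ (a - 1)) : M) = 0
      rw [Submodule.Quotient.mk_eq_zero, hval]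
      exact ⟨(w : M), rfl⟩
  have hcoker : Module.finrank K (M ⧸ LinearMap.range D)
      = Module.finrank K ((↥(ℳ (a - 1))) ⧸ LinearMap.ker φ) :=
    ((LinearMap.quotKerEquivOfSurjective φ hφsurj).finrank_eq).symm
  -- equality of dimensions of the two relevant pieces
  have hmapX : Submodule.map (X : M →ₗ[K] M) (ℳ (a - 1)) = ℳ a := by
    apply le_antisymm
    · rintro y ⟨x, hx, rfl⟩
      have h := hgradeX (a - 1) x hx
      have heq : a - 1 + 1 = a := by omega
      rw [heq] at h
      exact h
    · intro y hy
      obtain ⟨x, hx⟩ := hXbij.2 y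
      have hxmem : x ∈ ℳ (a - 1) := by
        apply hπ_single (a - 1) x
        intro k hk
        have h1 : X (π k x) = π (k + 1) (X x) := (hπX k x).symm
        have h2 : π (k + 1) (X x) = 0 := by
          rw [show (X x : M) = y from hx]
          exact hπ_ne (k + 1) a y hy (by omega)
        apply hXinj
        rw [h1, h2, map_zero]
      exact ⟨x, hxmem, hx⟩
  have hdim : Module.finrank K (ℳ a) = Module.finrank K (ℳ (a - 1)) := by
    rw [← hmapX]
    exact LinearEquiv.finrank_map_eq eX (ℳ (a - 1))
  have h1 := LinearMap.finrank_range_add_finrank_ker Da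
  have h2 := Submodule.finrank_quotient_add_finrank (LinearMap.ker φ)
  have h4 : Module.finrank K (LinearMap.ker φ) = Module.finrank K (LinearMap.range Da) := by
    rw [hφker]
  rw [hkereq, hcoker]
  omega
end

section
/- Let M be a nonzero graded holonomic generalized Eulerian A₁(K)-module such that multiplication by X on M is bijective (M = M_X). Then H₁(∂; M) = ker(∂ : M → M) is nonzero. -/
namespace Module.End

variable {R M : Type*} [Semiring R] [AddCommMonoid M] [Module R M]

theorem pow_injective {f : End R M} (hf : Function.Injective f) (n : ℕ) :
    Function.Injective (f ^ n) := by
  rw [coe_pow]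
  exact hf.iterate n

theorem pow_apply_mem_of_shift {ℳ : ℤ → Submodule R M} {f : End R M} {d : ℤ}
    (hf : ∀ j x, x ∈ ℳ j → f x ∈ ℳ (j + d)) (n : ℕ) {j : ℤ} {x : M} (hx : x ∈ ℳ j) :
    (f ^ n) x ∈ ℳ (j + n * d) := by
  induction n generalizing j x with
  | zero => simpa using hx
  | succ n ih =>
    rw [pow_succ, mul_apply]
    convert ih (hf j x hx) using 2
    push_cast
    ring

theorem eq_zero_of_mem_of_shift_of_injective {ℳ : ℤ → Submodule R M} {f : End R M} {d : ℤ}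
    (hf : ∀ j x, x ∈ ℳ j → f x ∈ ℳ (j + d)) (hinj : Function.Injective f)
    (h₀ : ℳ 0 = ⊥) {n : ℕ} {j : ℤ} (hj : j + n * d = 0) {x : M} (hx : x ∈ ℳ j) : x = 0 := by
  have hfx : (f ^ n) x ∈ ℳ 0 := hj ▸ pow_apply_mem_of_shift hf n hx
  rw [h₀, Submodule.mem_bot] at hfx
  exact pow_injective hinj n (hfx.trans (map_zero _).symm)

end Module.End

open Module.End

theorem ker_deRham_ne_bot_of_X_bijective_general
    (K : Type) [Field K]
    (M : Type) [AddCommGroup M] [Module K M] [Module (Polynomial K) M]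
    [SMulCommClass K (Polynomial K) M]
    (D : Module.End K M)
    -- grading
    (ℳ : ℤ → Submodule K M)
    (hdecomp : DirectSum.IsInternal ℳ)
    (hgradeX : ∀ (j : ℤ) (x : M), x ∈ ℳ j → (Polynomial.X : Polynomial K) • x ∈ ℳ (j + 1))
    (hgradeD : ∀ (j : ℤ) (x : M), x ∈ ℳ j → D x ∈ ℳ (j - 1))
    -- generalized Eulerian: `(ε − deg z)^a z = 0` for homogeneous `z`, where `ε = X∂`
    (hGE : ∀ (j : ℤ) (z : M), z ∈ ℳ j →
      ∃ a : ℕ, 0 < a ∧ ((mulX1 K M * D - j • 1) ^ a) z = 0)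
    -- multiplication by `X` is bijective on `M`
    (hbij : Function.Bijective fun x : M => (Polynomial.X : Polynomial K) • x)
    -- `M` is nonzero
    (hM : ∃ x : M, x ≠ 0) :
    LinearMap.ker D ≠ ⊥ := by
  intro hker
  have hDinj : Function.Injective D := LinearMap.ker_eq_bot.mp hker
  have hεinj : Function.Injective (mulX1 K M * D) := hbij.1.comp hDinj
  have h₀ : ℳ 0 = ⊥ := by
    refine (Submodule.eq_bot_iff _).mpr fun z hz => ?_
    obtain ⟨a, -, hz⟩ := hGE 0 z hz
    rw [zero_smul, sub_zero] at hz
    exact pow_injective hεinj a (hz.trans (map_zero _).symm)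
  have hD : ∀ j x, x ∈ ℳ j → D x ∈ ℳ (j + -1) := hgradeD
  have hall : ∀ j, ℳ j = ⊥ := fun j => (Submodule.eq_bot_iff _).mpr fun x hx => by
    rcases le_or_gt 0 j with hj | hj
    · exact eq_zero_of_mem_of_shift_of_injective hD hDinj h₀ (n := j.toNat) (by omega) hx
    · exact eq_zero_of_mem_of_shift_of_injective (f := mulX1 K M) hgradeX hbij.1 h₀
        (n := (-j).toNat) (by omega) hx
  have htop : (⊤ : Submodule K M) = ⊥ := by
    rw [← hdecomp.submodule_iSup_eq_top, iSup_eq_bot.mpr hall]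
  obtain ⟨x, hx⟩ := hM
  exact hx ((Submodule.mem_bot K).mp (htop ▸ Submodule.mem_top))

/-- A nonzero graded holonomic generalized Eulerian `A₁(K)`-module `M`
on which multiplication by `X` is bijective has nonzero first de Rham homology
`H₁(∂; M) = ker ∂`. -/
theorem ker_deRham_ne_bot_of_X_bijective
    (K : Type) [Field K] [CharZero K]
    (M : Type) [AddCommGroup M] [Module K M] [Module (Polynomial K) M]
    [IsScalarTower K (Polynomial K) M] [SMulCommClass K (Polynomial K) M]
    (D : Module.End K M)
    -- Leibniz rule
    (hleib : ∀ (f : Polynomial K) (x : M),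
      D (f • x) = (Polynomial.derivative f) • x + f • (D x))
    -- grading
    (ℳ : ℤ → Submodule K M)
    (hdecomp : DirectSum.IsInternal ℳ)
    (hgradeX : ∀ (j : ℤ) (x : M), x ∈ ℳ j → (Polynomial.X : Polynomial K) • x ∈ ℳ (j + 1))
    (hgradeD : ∀ (j : ℤ) (x : M), x ∈ ℳ j → D x ∈ ℳ (j - 1))
    -- generalized Eulerian: `(ε − deg z)^a z = 0` for homogeneous `z`, where `ε = X∂`
    (hGE : ∀ (j : ℤ) (z : M), z ∈ ℳ j →
      ∃ a : ℕ, 0 < a ∧ ((mulX1 K M * D - j • 1) ^ a) z = 0)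
    -- holonomic
    (hhol : IsHolonomic1 K M D)
    -- multiplication by `X` is bijective on `M`
    (hbij : Function.Bijective fun x : M => (Polynomial.X : Polynomial K) • x)
    -- `M` is nonzero
    (hM : ∃ x : M, x ≠ 0) :
    LinearMap.ker D ≠ ⊥ :=
  ker_deRham_ne_bot_of_X_bijective_general K M D ℳ hdecomp hgradeX hgradeD hGE hbij hM
end

section
/- Let E = E_{n+1}(K) be the inverse polynomial module (a model of the graded injective hull of K over R = K[X₀,…,Xₙ]). Then the Koszul homology of E with respect to multiplication by X₀,…,Xₙ satisfies: H_i(X; E) = 0 for all i ≠ n+1, and H_{n+1}(X; E) = {m ∈ E : Xᵢ·m = 0 for all i} is a one-dimensional K-vector space, spanned by the basis monomial X₀⁻¹X₁⁻¹⋯Xₙ⁻¹. -/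
/-- Koszul differential of a family of `K`-linear endomorphisms. -/
noncomputable def koszulD {K M : Type} [Field K] [AddCommGroup M] [Module K M]
    {m : ℕ} (f : Fin m → Module.End K M) (i : ℕ) :
    ({s : Finset (Fin m) // s.card = i + 1} → M) →ₗ[K]
      ({s : Finset (Fin m) // s.card = i} → M) :=
  LinearMap.pi fun t => ∑ j ∈ (t.1ᶜ).attach,
    ((-1 : K) ^ (t.1.filter (fun k => k < j.1)).card) •
      ((f j.1) ∘ₗ LinearMap.proj
        (⟨insert j.1 t.1, by
          rw [Finset.card_insert_of_notMem (Finset.mem_compl.mp j.2), t.2]⟩ :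
          {s : Finset (Fin m) // s.card = i + 1}))

/-- Koszul cycles: kernel of the outgoing differential (everything in degree 0). -/
noncomputable def koszulCycles {K M : Type} [Field K] [AddCommGroup M] [Module K M]
    {m : ℕ} (f : Fin m → Module.End K M) :
    (i : ℕ) → Submodule K ({s : Finset (Fin m) // s.card = i} → M)
  | 0 => ⊤
  | (i + 1) => LinearMap.ker (koszulD f i)

/-- `i`-th Koszul homology of the family `f`: cycles modulo boundaries. -/
@[reducible] noncomputable def koszulHomology {K M : Type} [Field K] [AddCommGroup M]
    [Module K M] {m : ℕ} (f : Fin m → Module.End K M) (i : ℕ) : Type :=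
  ↥(koszulCycles f i) ⧸
    Submodule.comap (koszulCycles f i).subtype (LinearMap.range (koszulD f i))

/-- Euler characteristic of Koszul homology of a family of `m` endomorphisms. -/
noncomputable def koszulChi {K M : Type} [Field K] [AddCommGroup M] [Module K M]
    {m : ℕ} (f : Fin m → Module.End K M) : ℤ :=
  ∑ i ∈ Finset.range (m + 1), (-1 : ℤ) ^ i * (Module.finrank K (koszulHomology f i) : ℤ)

/-- The inverse polynomial module `E_m(K)`: the `K`-vector space with basis the monomials
`X^b`, `b : Fin m → ℤ` with all `bᵢ ≤ -1`; the index `c : Fin m → ℕ` encodes the exponent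
`b = -(c + 1)`. -/
@[reducible] def InvPoly (K : Type) [Field K] (m : ℕ) : Type := (Fin m → ℕ) →₀ K

/-- Multiplication by `Xᵢ` on the inverse polynomial module:
`Xᵢ · X^b = X^{b+eᵢ}` if `bᵢ ≤ -2` and `0` if `bᵢ = -1`. -/
noncomputable def invMulX (K : Type) [Field K] (m : ℕ) (i : Fin m) :
    Module.End K (InvPoly K m) :=
  Finsupp.lsum K fun c =>
    if c i = 0 then 0 else Finsupp.lsingle (Function.update c i (c i - 1))

/-- The operator `∂ᵢ` on the inverse polynomial module: `∂ᵢ(X^b) = bᵢ · X^{b-eᵢ}`. -/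
noncomputable def invPartial (K : Type) [Field K] (m : ℕ) (i : Fin m) :
    Module.End K (InvPoly K m) :=
  Finsupp.lsum K fun c =>
    (-(c i : K) - 1) • (Finsupp.lsingle (Function.update c i (c i + 1)) : K →ₗ[K] InvPoly K m)


/-! ### Auxiliary development -/

section Koszul

variable {K M : Type} [Field K] [AddCommGroup M] [Module K M] {m : ℕ}
  (f g : Fin m → Module.End K M)

/-- The Koszul sign. -/
def sgn (K : Type) [Field K] {m : ℕ} (s : Finset (Fin m)) (j : Fin m) : K :=
  (-1 : K) ^ (s.filter (fun k => k < j)).card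

lemma sgn_sq_smul (s : Finset (Fin m)) (j : Fin m)
    (v : M) : sgn K s j • sgn K s j • v = v := by
  rw [smul_smul, sgn, ← pow_add, Even.neg_one_pow ⟨_, rfl⟩, one_smul]

lemma sgn_insert_of_lt (s : Finset (Fin m)) {a j : Fin m} (ha : a ∉ s) (h : a < j) :
    sgn K (insert a s) j = - sgn K s j := by
  rw [sgn, sgn, Finset.filter_insert, if_pos h,
    Finset.card_insert_of_notMem (by simp [ha]), pow_succ]
  ring

lemma sgn_insert_of_not_lt (s : Finset (Fin m)) {a j : Fin m} (h : ¬ a < j) :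
    sgn K (insert a s) j = sgn K s j := by
  rw [sgn, sgn, Finset.filter_insert, if_neg h]

lemma sgn_cancel (t : Finset (Fin m)) {k l : Fin m} (hk : k ∉ t) (hl : l ∈ t) :
    sgn K t k * sgn K (insert k (t.erase l)) l
      = - (sgn K (t.erase l) l * sgn K (t.erase l) k) := by
  have hne : k ≠ l := fun h => hk (h ▸ hl)
  have h1 : t = insert l (t.erase l) := (Finset.insert_erase hl).symm
  have hkk : k ∉ t.erase l := fun h => hk (Finset.mem_of_mem_erase h)
  rcases hne.lt_or_gt with h | h
  · rw [sgn_insert_of_lt _ hkk h]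
    nth_rewrite 1 [h1]
    rw [sgn_insert_of_not_lt _ (not_lt.mpr h.le)]
    ring
  · rw [sgn_insert_of_not_lt _ (not_lt.mpr h.le)]
    nth_rewrite 1 [h1]
    rw [sgn_insert_of_lt _ (Finset.notMem_erase l t) h]
    ring

/-- Extend a chain to all finsets by `0`. -/
def extC (i : ℕ) (x : {s : Finset (Fin m) // s.card = i} → M) : Finset (Fin m) → M :=
  fun s => if h : s.card = i then x ⟨s, h⟩ else 0

lemma extC_apply {i : ℕ} (x : {s : Finset (Fin m) // s.card = i} → M)
    (s : Finset (Fin m)) (h : s.card = i) : extC i x s = x ⟨s, h⟩ := dif_pos h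

lemma koszulD_apply (i : ℕ) (x : {s : Finset (Fin m) // s.card = i + 1} → M)
    (t : {s : Finset (Fin m) // s.card = i}) :
    koszulD f i x t = ∑ j ∈ t.1ᶜ,
      sgn K t.1 j • f j (extC (i+1) x (insert j t.1)) := by
  rw [koszulD]
  rw [LinearMap.pi_apply, LinearMap.sum_apply]
  rw [← Finset.sum_attach (t.1ᶜ) (fun j => sgn K t.1 j • f j (extC (i+1) x (insert j t.1)))]
  refine Finset.sum_congr rfl fun j _ => ?_
  rw [LinearMap.smul_apply, LinearMap.comp_apply, LinearMap.proj_apply]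
  rw [sgn]
  congr 1
  rw [extC_apply]

/-- Koszul homotopy built from `g`. -/
noncomputable def koszulH (i : ℕ) :
    ({s : Finset (Fin m) // s.card = i} → M) →ₗ[K]
      ({s : Finset (Fin m) // s.card = i + 1} → M) :=
  LinearMap.pi fun s => ∑ l ∈ s.1.attach,
    ((-1 : K) ^ ((s.1.erase l.1).filter (fun k => k < l.1)).card) •
      ((g l.1) ∘ₗ LinearMap.proj
        (⟨s.1.erase l.1, by rw [Finset.card_erase_of_mem l.2, s.2]; rfl⟩ :
          {s : Finset (Fin m) // s.card = i}))

lemma koszulH_apply (i : ℕ) (x : {s : Finset (Fin m) // s.card = i} → M)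
    (s : {s : Finset (Fin m) // s.card = i + 1}) :
    koszulH g i x s = ∑ l ∈ s.1,
      sgn K (s.1.erase l) l • g l (extC i x (s.1.erase l)) := by
  rw [koszulH, LinearMap.pi_apply, LinearMap.sum_apply]
  rw [← Finset.sum_attach (s.1) (fun l => sgn K (s.1.erase l) l • g l (extC i x (s.1.erase l)))]
  refine Finset.sum_congr rfl fun l _ => ?_
  rw [LinearMap.smul_apply, LinearMap.comp_apply, LinearMap.proj_apply, sgn]
  congr 1
  rw [extC_apply]

lemma koszulD_koszulH_apply (i : ℕ) (x : {s : Finset (Fin m) // s.card = i} → M)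
    (t : {s : Finset (Fin m) // s.card = i}) :
    koszulD f i (koszulH g i x) t
      = (∑ k ∈ t.1ᶜ, f k (g k (x t)))
        + ∑ k ∈ t.1ᶜ, ∑ l ∈ t.1,
            (sgn K t.1 k * sgn K ((insert k t.1).erase l) l) •
              f k (g l (extC i x ((insert k t.1).erase l))) := by
  have htt : (⟨t.1, t.2⟩ : {s : Finset (Fin m) // s.card = i}) = t := rfl
  rw [koszulD_apply]
  rw [← Finset.sum_add_distrib]
  refine Finset.sum_congr rfl fun k hk => ?_
  have hk' : k ∉ t.1 := Finset.mem_compl.mp hk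
  have hcard : (insert k t.1).card = i + 1 := by
    rw [Finset.card_insert_of_notMem hk', t.2]
  rw [extC_apply _ _ hcard, koszulH_apply]
  dsimp only
  rw [Finset.sum_insert hk']
  rw [Finset.erase_insert hk', extC_apply _ _ t.2, htt]
  rw [map_add, map_sum, smul_add, Finset.smul_sum]
  congr 1
  · rw [map_smul, sgn_sq_smul]
  · refine Finset.sum_congr rfl fun l hl => ?_
    rw [map_smul, smul_smul]

lemma koszul_homotopy (hc : ∀ k l, k ≠ l → (f k) ∘ₗ (g l) = (g l) ∘ₗ (f k)) (i : ℕ)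
    (x : {s : Finset (Fin m) // s.card = i + 1} → M)
    (t : {s : Finset (Fin m) // s.card = i + 1}) :
    koszulD f (i+1) (koszulH g (i+1) x) t + koszulH g i (koszulD f i x) t
      = (∑ k ∈ t.1ᶜ, f k (g k (x t))) + ∑ l ∈ t.1, g l (f l (x t)) := by
  have htt : (⟨t.1, t.2⟩ : {s : Finset (Fin m) // s.card = i + 1}) = t := rfl
  have hA := koszulD_koszulH_apply f g (i+1) x t
  have hB : koszulH g i (koszulD f i x) t
      = (∑ l ∈ t.1, g l (f l (x t)))
        + ∑ l ∈ t.1, ∑ k ∈ t.1ᶜ,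
            (sgn K (t.1.erase l) l * sgn K (t.1.erase l) k) •
              g l (f k (extC (i+1) x (insert k (t.1.erase l)))) := by
    rw [koszulH_apply]
    rw [← Finset.sum_add_distrib]
    refine Finset.sum_congr rfl fun l hl => ?_
    have hcard : (t.1.erase l).card = i := by
      rw [Finset.card_erase_of_mem hl, t.2]; rfl
    rw [extC_apply _ _ hcard, koszulD_apply]
    dsimp only
    rw [Finset.compl_erase, Finset.sum_insert (by simp [hl])]
    rw [Finset.insert_erase hl, extC_apply _ _ t.2, htt]
    rw [map_add, map_sum, smul_add, Finset.smul_sum]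
    congr 1
    · rw [map_smul, sgn_sq_smul]
    · refine Finset.sum_congr rfl fun k hk => ?_
      rw [map_smul, smul_smul]
  rw [hA, hB]
  have hzero : (∑ k ∈ t.1ᶜ, ∑ l ∈ t.1,
            (sgn K t.1 k * sgn K ((insert k t.1).erase l) l) •
              f k (g l (extC (i+1) x ((insert k t.1).erase l))))
      + ∑ l ∈ t.1, ∑ k ∈ t.1ᶜ,
            (sgn K (t.1.erase l) l * sgn K (t.1.erase l) k) •
              g l (f k (extC (i+1) x (insert k (t.1.erase l)))) = 0 := by
    rw [Finset.sum_comm (s := t.1) (t := t.1ᶜ)]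
    rw [← Finset.sum_add_distrib]
    refine Finset.sum_eq_zero fun k hk => ?_
    rw [← Finset.sum_add_distrib]
    refine Finset.sum_eq_zero fun l hl => ?_
    have hk' : k ∉ t.1 := Finset.mem_compl.mp hk
    have hne : k ≠ l := fun h => hk' (h ▸ hl)
    have hset : (insert k t.1).erase l = insert k (t.1.erase l) :=
      Finset.erase_insert_of_ne hne
    rw [hset, sgn_cancel t.1 hk' hl]
    have hcomm : f k (g l (extC (i+1) x (insert k (t.1.erase l))))
        = g l (f k (extC (i+1) x (insert k (t.1.erase l)))) := by
      have := LinearMap.congr_fun (hc k l hne) (extC (i+1) x (insert k (t.1.erase l)))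
      simpa using this
    rw [hcomm, neg_smul, neg_add_cancel]
  rw [add_add_add_comm, hzero, add_zero]

end Koszul

section InvPolyLemmas

variable (K : Type) [Field K] (m : ℕ)

/-- `σᵢ`: multiplication by `Xᵢ⁻¹`. -/
noncomputable def invSigma (i : Fin m) : Module.End K (InvPoly K m) :=
  Finsupp.lsum K fun c => Finsupp.lsingle (Function.update c i (c i + 1))

variable {K m}

lemma invMulX_single (i : Fin m) (c : Fin m → ℕ) (b : K) :
    invMulX K m i (Finsupp.single c b)
      = if c i = 0 then 0 else Finsupp.single (Function.update c i (c i - 1)) b := by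
  rw [invMulX, Finsupp.lsum_single]
  split_ifs with h <;> simp

lemma invSigma_single (i : Fin m) (c : Fin m → ℕ) (b : K) :
    invSigma K m i (Finsupp.single c b)
      = Finsupp.single (Function.update c i (c i + 1)) b := by
  rw [invSigma, Finsupp.lsum_single, Finsupp.lsingle_apply]

lemma invMulX_invSigma (k : Fin m) :
    (invMulX K m k) ∘ₗ (invSigma K m k) = LinearMap.id := by
  refine Finsupp.lhom_ext fun c b => ?_
  rw [LinearMap.comp_apply, invSigma_single, invMulX_single, LinearMap.id_apply]
  rw [if_neg (by simp), Function.update_idem]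
  simp

lemma invSigma_invMulX (l : Fin m) (c : Fin m → ℕ) (b : K) :
    invSigma K m l (invMulX K m l (Finsupp.single c b))
      = if c l = 0 then 0 else Finsupp.single c b := by
  rw [invMulX_single]
  split_ifs with h
  · simp
  · rw [invSigma_single]
    congr 1
    simp only [Function.update_idem, Function.update_self]
    have : c l - 1 + 1 = c l := by omega
    rw [this, Function.update_eq_self]

lemma invMulX_invSigma_comm {k l : Fin m} (h : k ≠ l) :
    (invMulX K m k) ∘ₗ (invSigma K m l) = (invSigma K m l) ∘ₗ (invMulX K m k) := by
  refine Finsupp.lhom_ext fun c b => ?_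
  rw [LinearMap.comp_apply, LinearMap.comp_apply, invSigma_single, invMulX_single,
    invMulX_single]
  rw [Function.update_of_ne h]
  split_ifs with hc
  · simp
  · rw [invSigma_single, Function.update_comm h]
    congr 2
    rw [Function.update_of_ne (Ne.symm h)]

/-- Diagonal operator on `InvPoly`. -/
noncomputable def diagE (φ : ℕ → K) (t : Finset (Fin m)) : Module.End K (InvPoly K m) :=
  Finsupp.lsum K fun c => φ ((t.filter fun l => c l = 0).card) • Finsupp.lsingle c

lemma diagE_single (φ : ℕ → K) (t : Finset (Fin m)) (c : Fin m → ℕ) (b : K) :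
    diagE φ t (Finsupp.single c b)
      = φ ((t.filter fun l => c l = 0).card) • Finsupp.single c b := by
  rw [diagE, Finsupp.lsum_single, LinearMap.smul_apply, Finsupp.lsingle_apply]

lemma diag_formula (t : Finset (Fin m)) (v : InvPoly K m) :
    ((∑ k ∈ tᶜ, invMulX K m k (invSigma K m k v)) + ∑ l ∈ t, invSigma K m l (invMulX K m l v))
      = diagE (fun w => (m : K) - w) t v := by
  have := LinearMap.congr_fun (R := K)
    (f := (∑ k ∈ tᶜ, (invMulX K m k) ∘ₗ (invSigma K m k))
      + ∑ l ∈ t, (invSigma K m l) ∘ₗ (invMulX K m l))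
    (g := diagE (fun w => (m : K) - w) t) ?_ v
  · simpa using this
  refine Finsupp.lhom_ext fun c b => ?_
  rw [LinearMap.add_apply, LinearMap.sum_apply, LinearMap.sum_apply, diagE_single]
  have h1 : ∀ k : Fin m, ((invMulX K m k) ∘ₗ (invSigma K m k)) (Finsupp.single c b)
      = Finsupp.single c b := by
    intro k; rw [invMulX_invSigma]; rfl
  have h2 : ∀ l : Fin m, ((invSigma K m l) ∘ₗ (invMulX K m l)) (Finsupp.single c b)
      = if c l = 0 then 0 else Finsupp.single c b := fun l => invSigma_invMulX l c b
  rw [Finset.sum_congr rfl fun k _ => h1 k, Finset.sum_congr rfl fun l _ => h2 l]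
  rw [Finset.sum_const, Finset.sum_ite, Finset.sum_const_zero, Finset.sum_const, zero_add]
  have hw : (t.filter fun l => c l = 0).card + (t.filter fun l => ¬ c l = 0).card = t.card :=
    Finset.card_filter_add_card_filter_not _
  have hc : t.card + tᶜ.card = m := by
    rw [Finset.card_add_card_compl]; simp
  have : ((m : K) - ((t.filter fun l => c l = 0).card : K))
      = ((tᶜ.card + (t.filter fun l => ¬ c l = 0).card : ℕ) : K) := by
    push_cast
    have e1 : ((m : K)) = ((t.card : K) + (tᶜ.card : K)) := by exact_mod_cast congrArg _ hc.symm
    rw [e1]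
    have e2 : ((t.card : K)) = (((t.filter fun l => c l = 0).card : K)
        + ((t.filter fun l => ¬ c l = 0).card : K)) := by exact_mod_cast congrArg _ hw.symm
    rw [e2]; ring
  rw [this, Nat.cast_smul_eq_nsmul, add_nsmul]

lemma diagE_mulX_comm (φ : ℕ → K) {t : Finset (Fin m)} {k : Fin m} (hk : k ∉ t) :
    (diagE φ t) ∘ₗ (invMulX K m k) = (invMulX K m k) ∘ₗ (diagE φ (insert k t)) := by
  refine Finsupp.lhom_ext fun c b => ?_
  rw [LinearMap.comp_apply, LinearMap.comp_apply, invMulX_single, diagE_single, map_smul,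
    invMulX_single]
  by_cases hc : c k = 0
  · simp [hc]
  · simp only [if_neg hc]
    rw [diagE_single]
    have e1 : (insert k t).filter (fun l => c l = 0) = t.filter (fun l => c l = 0) := by
      rw [Finset.filter_insert, if_neg hc]
    have e2 : t.filter (fun l => Function.update c k (c k - 1) l = 0)
        = t.filter (fun l => c l = 0) := by
      refine Finset.filter_congr fun l hl => ?_
      rw [Function.update_of_ne (by rintro rfl; exact hk hl)]
    rw [e1, e2]

lemma diagE_diagE (φ ψ : ℕ → K) (t : Finset (Fin m)) (h : ∀ w ≤ t.card, φ w * ψ w = 1)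
    (v : InvPoly K m) : diagE φ t (diagE ψ t v) = v := by
  have := LinearMap.congr_fun (R := K)
    (f := (diagE φ t) ∘ₗ (diagE ψ t)) (g := LinearMap.id) ?_ v
  · simpa using this
  refine Finsupp.lhom_ext fun c b => ?_
  rw [LinearMap.comp_apply, diagE_single, map_smul, diagE_single, smul_smul, mul_comm,
    h _ (Finset.card_filter_le _ _), one_smul, LinearMap.id_apply]

lemma koszulD_diag (φ : ℕ → K) (i : ℕ)
    (z : {s : Finset (Fin m) // s.card = i + 1} → InvPoly K m)
    (t : {s : Finset (Fin m) // s.card = i}) :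
    koszulD (invMulX K m) i (fun s => diagE φ s.1 (z s)) t
      = diagE φ t.1 (koszulD (invMulX K m) i z t) := by
  rw [koszulD_apply, koszulD_apply, map_sum]
  refine Finset.sum_congr rfl fun k hk => ?_
  have hk' : k ∉ t.1 := Finset.mem_compl.mp hk
  have hcard : (insert k t.1).card = i + 1 := by rw [Finset.card_insert_of_notMem hk', t.2]
  rw [extC_apply _ _ hcard, extC_apply _ _ hcard]
  rw [map_smul]
  congr 1
  exact (LinearMap.congr_fun (diagE_mulX_comm φ hk') _).symm

lemma iInf_ker_invMulX :
    (⨅ i : Fin m, LinearMap.ker (invMulX K m i))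
      = Submodule.span K {Finsupp.single (0 : Fin m → ℕ) (1 : K)} := by
  apply le_antisymm
  · intro v hv
    simp only [Submodule.mem_iInf, LinearMap.mem_ker] at hv
    have hsupp : v.support ⊆ {0} := by
      intro c hc
      rw [Finset.mem_singleton]
      by_contra hne
      obtain ⟨i, hi⟩ : ∃ i, c i ≠ 0 := by
        by_contra hall; push_neg at hall; exact hne (funext hall)
      set d := Function.update c i (c i - 1) with hd
      have hv' : invMulX K m i v
          = v.sum fun c' a =>
              if c' i = 0 then 0 else Finsupp.single (Function.update c' i (c' i - 1)) a := by
        conv_lhs => rw [← Finsupp.sum_single v, map_finsuppSum]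
        exact Finset.sum_congr rfl fun c' _ => invMulX_single i c' _
      have h0 : (v.sum fun c' a =>
          if c' i = 0 then 0 else Finsupp.single (Function.update c' i (c' i - 1)) a) d = 0 := by
        rw [← hv', hv i]; rfl
      rw [Finsupp.sum_apply] at h0
      rw [Finsupp.sum, Finset.sum_eq_single_of_mem c hc] at h0
      · rw [if_neg hi] at h0
        rw [Finsupp.single_eq_same] at h0
        exact (Finsupp.mem_support_iff.mp hc) h0
      · intro c' hc' hne'
        by_cases h' : c' i = 0
        · rw [if_pos h']; rfl
        · rw [if_neg h']
          apply Finsupp.single_eq_of_ne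
          intro heq
          apply hne'
          funext j
          by_cases hj : j = i
          · subst hj
            have := congrFun heq j
            rw [Function.update_self, hd, Function.update_self] at this
            omega
          · have := congrFun heq j
            rw [Function.update_of_ne hj, hd, Function.update_of_ne hj] at this
            exact this.symm
    have hvs : v = (v 0) • Finsupp.single (0 : Fin m → ℕ) (1 : K) := by
      rw [Finsupp.smul_single, smul_eq_mul, mul_one]
      exact (Finsupp.eq_single_iff.mpr ⟨hsupp, rfl⟩)
    rw [hvs]
    exact Submodule.smul_mem _ _ (Submodule.mem_span_singleton_self _)
  · rw [Submodule.span_le, Set.singleton_subset_iff, SetLike.mem_coe, Submodule.mem_iInf]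
    intro i
    simp [LinearMap.mem_ker, invMulX_single]

end InvPolyLemmas

set_option maxHeartbeats 1000000 in
set_option synthInstance.maxHeartbeats 200000 in
/-- For the inverse polynomial module `E = E_{n+1}(K)`, the Koszul
homology with respect to multiplication by `X₀, …, Xₙ` satisfies `H_i(X; E) = 0` for
`i ≠ n+1`, while `H_{n+1}(X; E) = {m ∈ E : Xᵢ·m = 0 for all i}` is one-dimensional,
spanned by the monomial `X₀⁻¹X₁⁻¹⋯Xₙ⁻¹`. -/
theorem koszulHomology_invPoly_mulX (K : Type) [Field K] [CharZero K] (n : ℕ) :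
    (∀ i : ℕ, i ≠ n + 1 → Subsingleton (koszulHomology (invMulX K (n + 1)) i)) ∧
    Module.finrank K (koszulHomology (invMulX K (n + 1)) (n + 1)) = 1 ∧
    (⨅ i : Fin (n + 1), LinearMap.ker (invMulX K (n + 1) i)) =
      Submodule.span K {Finsupp.single (0 : Fin (n + 1) → ℕ) (1 : K)} := by
  have hker := (iInf_ker_invMulX (K := K) (m := n+1))
  set f := invMulX K (n+1) with hf
  set g := invSigma K (n+1) with hg
  have hc : ∀ k l : Fin (n+1), k ≠ l → (f k) ∘ₗ (g l) = (g l) ∘ₗ (f k) :=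
    fun k l h => invMulX_invSigma_comm h
  have hfg : ∀ (k : Fin (n+1)) (v : InvPoly K (n+1)), f k (g k v) = v := by
    intro k v
    have := LinearMap.congr_fun (invMulX_invSigma (K := K) (m := n+1) k) v
    simpa using this
  refine ⟨?_, ?_, hker⟩
  · -- vanishing in degrees ≠ n+1
    intro i hi
    rcases Nat.lt_or_ge i (n+1) with hlt | hge
    · refine Submodule.Quotient.subsingleton_iff.mpr ?_
      rw [Submodule.eq_top_iff']
      intro x
      rw [Submodule.mem_comap]
      cases i with
      | zero =>
        refine ⟨((n+1 : ℕ) : K)⁻¹ • koszulH g 0 x.1, ?_⟩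
        rw [map_smul]
        show _ = x.1
        funext t
        have ht : t.1 = ∅ := Finset.card_eq_zero.mp t.2
        rw [Pi.smul_apply, koszulD_koszulH_apply, ht]
        have e1 : ∑ k ∈ (∅ : Finset (Fin (n+1)))ᶜ, f k (g k (x.1 t))
            = ∑ _k ∈ (∅ : Finset (Fin (n+1)))ᶜ, x.1 t :=
          Finset.sum_congr rfl fun k _ => hfg k _
        rw [e1]
        simp only [Finset.sum_empty, Finset.sum_const_zero, add_zero]
        rw [Finset.compl_empty, Finset.sum_const, Finset.card_univ, Fintype.card_fin]
        rw [← Nat.cast_smul_eq_nsmul K, smul_smul,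
          inv_mul_cancel₀ (by exact_mod_cast Nat.succ_ne_zero n), one_smul]
      | succ j =>
        have hx : koszulD f j x.1 = 0 := x.2
        have h1 : ∀ t, koszulD f (j+1) (koszulH g (j+1) x.1) t
            = diagE (fun w => ((n+1 : ℕ) : K) - w) t.1 (x.1 t) := by
          intro t
          have H := koszul_homotopy f g hc j x.1 t
          rw [hx, map_zero] at H
          simp only [Pi.zero_apply, add_zero] at H
          rw [H]
          exact diag_formula t.1 (x.1 t)
        refine ⟨fun s => diagE (fun w => (((n+1 : ℕ) : K) - w)⁻¹) s.1 (koszulH g (j+1) x.1 s), ?_⟩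
        show _ = x.1
        funext t
        rw [koszulD_diag, h1 t]
        apply diagE_diagE
        intro w hw
        rw [t.2] at hw
        have hwn : w < n + 1 := by omega
        have hcast : (((n+1 : ℕ)) : K) - (w : K) ≠ 0 := by
          rw [sub_ne_zero]
          exact_mod_cast (by omega : (n+1 : ℕ) ≠ w)
        exact inv_mul_cancel₀ hcast
    · have hge2 : n + 2 ≤ i := by omega
      haveI : IsEmpty {s : Finset (Fin (n+1)) // s.card = i} := ⟨fun s => by
        have h1 : s.1.card ≤ n + 1 := by
          have := Finset.card_le_univ s.1
          simpa using this
        have h2 := s.2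
        omega⟩
      haveI hS : Subsingleton ({s : Finset (Fin (n+1)) // s.card = i} → InvPoly K (n+1)) :=
        ⟨fun a b => funext fun s => isEmptyElim s⟩
      refine Submodule.Quotient.subsingleton_iff.mpr ?_
      rw [Submodule.eq_top_iff']
      intro x
      haveI : Subsingleton (↥(koszulCycles f i)) :=
        ⟨fun a b => Subtype.ext (Subsingleton.elim _ _)⟩
      rw [Subsingleton.elim x 0]
      exact Submodule.zero_mem _
  · -- finrank of H_{n+1}
    letI hU : Unique {s : Finset (Fin (n+1)) // s.card = n+1} :=
      { default := ⟨Finset.univ, by simp⟩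
        uniq := fun s => Subtype.ext
          (Finset.eq_univ_of_card _ (by rw [s.2, Fintype.card_fin])) }
    haveI hE : IsEmpty {s : Finset (Fin (n+1)) // s.card = (n+1)+1} := ⟨fun s => by
      have h1 : s.1.card ≤ n + 1 := by
        have := Finset.card_le_univ s.1
        simpa using this
      have h2 := s.2
      omega⟩
    have hbot : Submodule.comap (koszulCycles f (n+1)).subtype
        (LinearMap.range (koszulD f (n+1))) = ⊥ := by
      have hrange : LinearMap.range (koszulD f (n+1)) = ⊥ := by
        rw [eq_bot_iff]
        rintro z ⟨y, rfl⟩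
        haveI : Subsingleton ({s : Finset (Fin (n+1)) // s.card = (n+1)+1} → InvPoly K (n+1)) :=
          ⟨fun a b => funext fun s => isEmptyElim s⟩
        rw [Subsingleton.elim y 0, map_zero]
        exact Submodule.zero_mem ⊥
      rw [hrange, Submodule.comap_bot, Submodule.ker_subtype]
    letI : AddCommGroup ↥(koszulCycles f (n+1)) := Submodule.addCommGroup _
    have e1 : Module.finrank K (koszulHomology f (n+1))
        = Module.finrank K ↥(koszulCycles f (n+1)) :=
      LinearEquiv.finrank_eq (Submodule.quotEquivOfEqBot _ hbot)
    rw [e1]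
    set e := LinearEquiv.funUnique {s : Finset (Fin (n+1)) // s.card = n+1} K (InvPoly K (n+1))
      with he
    have hmap : Submodule.map e.toLinearMap (koszulCycles f (n+1))
        = ⨅ i : Fin (n+1), LinearMap.ker (f i) := by
      ext v
      simp only [Submodule.mem_map, Submodule.mem_iInf, LinearMap.mem_ker]
      constructor
      · rintro ⟨x, hx, rfl⟩ i
        have hx' : koszulD f n x = 0 := hx
        have htc : (Finset.univ.erase i).card = n := by
          rw [Finset.card_erase_of_mem (Finset.mem_univ i), Finset.card_univ, Fintype.card_fin]
          omega
        have h := congrFun hx' (⟨Finset.univ.erase i, htc⟩ : {s : Finset (Fin (n+1)) // s.card = n})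
        rw [koszulD_apply] at h
        have hcompl : (Finset.univ.erase i)ᶜ = {i} := by
          rw [Finset.compl_erase, Finset.compl_univ, Finset.insert_empty]
        simp only [hcompl, Finset.sum_singleton, Finset.insert_erase (Finset.mem_univ i),
          Pi.zero_apply] at h
        rw [extC_apply _ _ (by rw [Finset.card_univ, Fintype.card_fin])] at h
        have hdef : (default : {s : Finset (Fin (n+1)) // s.card = n+1})
            = (⟨Finset.univ, by rw [Finset.card_univ, Fintype.card_fin]⟩ :
              {s : Finset (Fin (n+1)) // s.card = n+1}) := Subtype.ext rfl
        have hxd : x (⟨Finset.univ, by rw [Finset.card_univ, Fintype.card_fin]⟩ :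
            {s : Finset (Fin (n+1)) // s.card = n+1}) = e x := by
          rw [he, LinearEquiv.funUnique_apply, Function.eval, hdef]
        rw [hxd] at h
        rcases smul_eq_zero.mp h with h' | h'
        · exact absurd h' (by rw [sgn]; exact pow_ne_zero _ (by norm_num))
        · exact h'
      · intro hv
        refine ⟨fun _ => v, ?_, ?_⟩
        · show koszulD f n _ = 0
          funext t
          rw [koszulD_apply, Pi.zero_apply]
          refine Finset.sum_eq_zero fun k hk => ?_
          have hk' : k ∉ t.1 := Finset.mem_compl.mp hk
          have hcard : (insert k t.1).card = n + 1 := by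
            rw [Finset.card_insert_of_notMem hk', t.2]
          rw [extC_apply _ _ hcard]
          rw [hv k, smul_zero]
        · rfl
    have e2 : Module.finrank K ↥(koszulCycles f (n+1))
        = Module.finrank K ↥(Submodule.map e.toLinearMap (koszulCycles f (n+1))) :=
      LinearEquiv.finrank_eq (e.submoduleMap (koszulCycles f (n+1)))
    rw [e2, hmap, hker]
    exact finrank_span_singleton (by
      simp [Finsupp.single_eq_zero])
end
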